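/- arXiv:math/9911030 — 7 statements merged into one kernel-verified Lean document; each statement's English description precedes it below -/
import Mathlib

section
/- Let R be a unique factorization domain with field of fractions K, and let f(t) = Σ_{i=0}^m a_i t^i and g(t) = Σ_{j=0}^n b_j t^j be relatively prime polynomials in R[t] with b_0 ≠ 0. If every coefficient of the formal power series expansion of f/g in K[[t]] lies in R, then b_0 is a unit in R. -/
/-!
Since `f` and `g` are coprime, Gauss's lemma makes them coprime over `K`, and clearing
denominators in a Bézout identity gives `a f + b g = r` with `a, b ∈ R[t]` and `0 ≠ r ∈ R`.
If `Q ∈ R[[t]]` is the expansion of `f / g`, then `g (a Q + b) = r`. No prime `p` divides all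
coefficients of `g` (it would then divide `f = g Q` too), so `p` is prime in `R[[t]]` and does
not divide `g`; hence all powers of `p` dividing `r` can be cancelled from `a Q + b`. What remains
is `g W = r'` with `p ∤ r'`, and comparing constant terms shows `p ∤ b₀`.
-/

open Polynomial PowerSeries
open scoped nonZeroDivisors

namespace PowerSeries

variable {R : Type*}

theorem C_dvd_iff_forall_dvd_coeff [CommSemiring R] {p : R} {W : R⟦X⟧} :
    C p ∣ W ↔ ∀ n, p ∣ coeff n W := by
  refine ⟨fun ⟨V, hV⟩ n ↦ by simp [hV], fun h ↦ ⟨mk fun n ↦ (h n).choose, ?_⟩⟩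
  ext n
  simpa using (h n).choose_spec

theorem prime_C [CommRing R] {p : R} (hp : Prime p) : Prime (C p : R⟦X⟧) := by
  -- `span {C p}` is the kernel of reduction mod `p` into the domain `(R ⧸ p)⟦X⟧`.
  have : (Ideal.span {p}).IsPrime := (Ideal.span_singleton_prime hp.ne_zero).mpr hp
  have hker : RingHom.ker (map (Ideal.Quotient.mk (Ideal.span {p}))) = Ideal.span {C p} := by
    ext W
    simp [RingHom.mem_ker, Ideal.mem_span_singleton, C_dvd_iff_forall_dvd_coeff,
      PowerSeries.ext_iff, Ideal.Quotient.eq_zero_iff_dvd]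
  rw [← Ideal.span_singleton_prime ((map_ne_zero_iff _ C_injective).mpr hp.ne_zero), ← hker]
  exact RingHom.ker_isPrime _

theorem not_dvd_constantCoeff_of_mul_eq_C [CommRing R] [IsDomain R] [WfDvdMonoid R]
    {G W : R⟦X⟧} {r : R} (hr : r ≠ 0) (hGW : G * W = C r) {p : R} (hp : Prime p)
    (hpG : ¬ C p ∣ G) : ¬ p ∣ constantCoeff G := by
  obtain ⟨n, a, hpa, rfl⟩ := WfDvdMonoid.max_power_factor' hr hp.not_isUnit
  obtain ⟨V, rfl⟩ : C p ^ n ∣ W :=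
    (prime_C hp).pow_dvd_of_dvd_mul_left n hpG ⟨C a, by rw [hGW, map_mul, map_pow]⟩
  have hGV : G * V = C a := by
    have hpn : (C p ^ n : R⟦X⟧) ≠ 0 := pow_ne_zero n (prime_C hp).ne_zero
    apply mul_left_cancel₀ hpn
    rw [map_mul, map_pow] at hGW
    linear_combination hGW
  intro hpG0
  have hcc := congrArg constantCoeff hGV
  rw [map_mul, constantCoeff_C] at hcc
  exact hpa (hcc ▸ hpG0.mul_right _)

theorem exists_map_eq_of_forall_coeff_mem_range {S : Type*} [Semiring R] [Semiring S]
    (φ : R →+* S) {F : S⟦X⟧} (h : ∀ n, ∃ r, coeff n F = φ r) : ∃ Q, map φ Q = F :=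
  ⟨mk fun n ↦ (h n).choose, by ext n; simpa using ((h n).choose_spec).symm⟩

end PowerSeries

namespace Polynomial

theorem C_dvd_iff_C_dvd_coe {R : Type*} [CommSemiring R] {p : R} {P : R[X]} :
    C p ∣ P ↔ PowerSeries.C p ∣ (P : R⟦X⟧) := by
  simp only [C_dvd_iff_dvd_coeff, PowerSeries.C_dvd_iff_forall_dvd_coeff, coeff_coe]

section FractionMap

variable {R K : Type*} [CommRing R] [IsDomain R] [Field K] [Algebra R K] [IsFractionRing R K]

theorem primPart_integerNormalization_map_dvd [NormalizedGCDMonoid R] (d : K[X]) :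
    (IsLocalization.integerNormalization R⁰ d).primPart.map (algebraMap R K) ∣ d := by
  obtain ⟨b, hb, hbd⟩ := IsLocalization.integerNormalization_spec R⁰ d
  have hunit : IsUnit (C (algebraMap R K b)) :=
    isUnit_C.mpr (isUnit_iff_ne_zero.mpr
      (IsFractionRing.to_map_ne_zero_of_mem_nonZeroDivisors hb))
  have := map_dvd (algebraMap R K) (primPart_dvd (IsLocalization.integerNormalization R⁰ d))
  rwa [hbd, ← algebraMap_smul K, smul_eq_C_mul, hunit.dvd_mul_left] at this

theorem isRelPrime_fraction_map_of_isRelPrime [IsGCDMonoid R] {f g : R[X]} (h : IsRelPrime f g) :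
    IsRelPrime (f.map (algebraMap R K)) (g.map (algebraMap R K)) := by
  let : NormalizedGCDMonoid R := Nonempty.some inferInstance
  intro d hdf hdg
  obtain rfl | hd := eq_or_ne d 0
  · rw [zero_dvd_iff, Polynomial.map_eq_zero_iff (IsFractionRing.injective R K)] at hdf hdg
    subst hdf hdg
    exact absurd (h dvd_rfl dvd_rfl) not_isUnit_zero
  have hprim := isPrimitive_primPart (IsLocalization.integerNormalization R⁰ d)
  refine isUnit_or_eq_zero_of_isUnit_integerNormalization_primPart hd (h ?_ ?_)
  · exact hprim.dvd_of_fraction_map_dvd_fraction_map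
      ((primPart_integerNormalization_map_dvd d).trans hdf)
  · exact hprim.dvd_of_fraction_map_dvd_fraction_map
      ((primPart_integerNormalization_map_dvd d).trans hdg)

theorem exists_mul_add_mul_eq_C_of_isCoprime_fraction_map {f g : R[X]}
    (h : IsCoprime (f.map (algebraMap R K)) (g.map (algebraMap R K))) :
    ∃ (a b : R[X]) (r : R), r ≠ 0 ∧ a * f + b * g = C r := by
  obtain ⟨u, v, huv⟩ := h
  obtain ⟨c, hc, hcu⟩ := IsLocalization.integerNormalization_spec R⁰ u
  obtain ⟨e, he, hev⟩ := IsLocalization.integerNormalization_spec R⁰ v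
  refine ⟨C e * IsLocalization.integerNormalization R⁰ u,
    C c * IsLocalization.integerNormalization R⁰ v, c * e,
    mul_ne_zero (nonZeroDivisors.ne_zero hc) (nonZeroDivisors.ne_zero he), ?_⟩
  apply map_injective (algebraMap R K) (IsFractionRing.injective R K)
  simp only [Polynomial.map_add, Polynomial.map_mul, map_C, hcu, hev,
    ← algebraMap_smul K c, ← algebraMap_smul K e, smul_eq_C_mul, map_mul]
  linear_combination C (algebraMap R K c) * C (algebraMap R K e) * huv

end FractionMap

end Polynomial

/-- Let `R` be a UFD with field of fractions `K`, and let `f, g ∈ R[t]` be relatively prime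
polynomials with constant coefficient of `g` nonzero. If every coefficient of the power series
expansion of `f/g` in `K[[t]]` lies in `R`, then the constant coefficient of `g` is a unit. -/
theorem constant_coeff_unit_of_integral_taylor_coeffs
    {R K : Type*} [CommRing R] [IsDomain R] [UniqueFactorizationMonoid R]
    [Field K] [Algebra R K] [IsFractionRing R K]
    (f g : Polynomial R) (hcop : IsRelPrime f g) (hb0 : g.coeff 0 ≠ 0)
    (h : ∀ n : ℕ, ∃ r : R,
      PowerSeries.coeff n
        (((f.map (algebraMap R K) : Polynomial K) : PowerSeries K) *
          ((g.map (algebraMap R K) : Polynomial K) : PowerSeries K)⁻¹) = algebraMap R K r) :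
    IsUnit (g.coeff 0) := by
  have hinj : Function.Injective (algebraMap R K) := IsFractionRing.injective R K
  obtain ⟨Q, hQ⟩ := PowerSeries.exists_map_eq_of_forall_coeff_mem_range _ h
  have hgQ : (g : R⟦X⟧) * Q = f := by
    have hg : constantCoeff ((g.map (algebraMap R K) : K[X]) : K⟦X⟧) ≠ 0 := by
      rw [constantCoeff_coe, Polynomial.coeff_map]
      exact (map_ne_zero_iff _ hinj).mpr hb0
    apply PowerSeries.map_injective _ hinj
    rw [map_mul, ← polynomial_map_coe, ← polynomial_map_coe, hQ, mul_left_comm,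
      PowerSeries.mul_inv_cancel _ hg, mul_one]
  obtain ⟨a, b, r, hr, hab⟩ := exists_mul_add_mul_eq_C_of_isCoprime_fraction_map
    (isRelPrime_fraction_map_of_isRelPrime (K := K) hcop).isCoprime
  have hgW : (g : R⟦X⟧) * (a * Q + b) = PowerSeries.C r := by
    have hab' := congrArg (fun P : R[X] ↦ (P : R⟦X⟧)) hab
    push_cast at hab'
    linear_combination (a : R⟦X⟧) * hgQ + hab'
  have hg_prim : ∀ p : R, Prime p → ¬ PowerSeries.C p ∣ (g : R⟦X⟧) := by
    intro p hp hpg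
    have hpf : PowerSeries.C p ∣ (f : R⟦X⟧) := hgQ ▸ hpg.mul_right Q
    exact hp.not_isUnit <| isUnit_C.mp <|
      hcop (C_dvd_iff_C_dvd_coe.mpr hpf) (C_dvd_iff_C_dvd_coe.mpr hpg)
  by_contra hu
  obtain ⟨p, hp, hpg⟩ := WfDvdMonoid.exists_irreducible_factor hu hb0
  exact PowerSeries.not_dvd_constantCoeff_of_mul_eq_C hr hgW hp.prime (hg_prim p hp.prime)
    (by rwa [constantCoeff_coe])
end

section
/- Let b_0, ..., b_{m-1} be positive integers and c_m, ..., c_d be positive integers (viewed as the negatives -b_m, ..., -b_d of the negative entries of a circuit vector) with b_0 + ... + b_{m-1} = c_m + ... + c_d. Then the identity ∏_{i=0}^{m-1} ∏_{j=1}^{b_i} (n b_i + j) = ∏_{i=m}^{d} ∏_{j=1}^{c_i} (n c_i + j) holds for all natural numbers n ≥ 0 if and only if the multiset {b_0, ..., b_{m-1}} equals the multiset {c_m, ..., c_d}. -/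
/-!
Both sides are the values at `n` of the polynomials `P_b(X) = ∏ᵢ ∏_{j=1}^{bᵢ} (bᵢ X + j)` over `ℚ`,
so the identity for all `n` forces `P_b = P_c` and hence equal root multisets. The root `-1/v`
of `P_b` has multiplicity `#{i | v ∣ bᵢ}`, and these counts determine the multiset of the `bᵢ`:
at the largest value `u` whose multiplicities differ, the multiplicities of all proper multiples
of `u` agree, so equal counts of multiples of `u` force equal multiplicities of `u`.
-/

open Finset Polynomial

namespace Multiset

theorem countP_dvd_eq_count_add_countP_dvd_filter_lt {s : Multiset ℕ} (hs : 0 ∉ s) (u : ℕ) :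
    s.countP (u ∣ ·) = s.count u + (s.filter (u < ·)).countP (u ∣ ·) := by
  rw [countP_eq_countP_filter_add s _ (u < ·), add_comm, countP_filter, count, countP_filter]
  congr 1
  refine countP_congr rfl fun x hx => propext ⟨fun ⟨hdvd, hle⟩ => ?_, ?_⟩
  · exact Nat.le_antisymm (Nat.le_of_dvd (Nat.pos_of_ne_zero (ne_of_mem_of_not_mem hx hs)) hdvd)
      (not_lt.mp hle)
  · rintro rfl; exact ⟨dvd_rfl, lt_irrefl u⟩

theorem eq_of_forall_countP_dvd_eq {s t : Multiset ℕ} (hs : 0 ∉ s) (ht : 0 ∉ t)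
    (h : ∀ v, 0 < v → s.countP (v ∣ ·) = t.countP (v ∣ ·)) : s = t := by
  by_contra hne
  have hmem : ∀ {u}, s.count u ≠ t.count u → u ∈ (s + t).toFinset := by
    intro u hu
    rw [mem_toFinset, mem_add]
    by_contra! hnot
    exact hu (by rw [count_eq_zero.mpr hnot.1, count_eq_zero.mpr hnot.2])
  set D := (s + t).toFinset.filter (fun u => s.count u ≠ t.count u)
  obtain ⟨u₀, hu₀⟩ := not_forall.mp (mt Multiset.ext.mpr hne)
  have hD : D.Nonempty := ⟨u₀, Finset.mem_filter.mpr ⟨hmem hu₀, hu₀⟩⟩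
  set u := D.max' hD
  have hu : s.count u ≠ t.count u := (Finset.mem_filter.mp (D.max'_mem hD)).2
  have hpos : 0 < u := Nat.pos_of_ne_zero fun h0 => hu <| by
    rw [h0, count_eq_zero.mpr hs, count_eq_zero.mpr ht]
  have habove : s.filter (u < ·) = t.filter (u < ·) := by
    ext w
    rw [count_filter, count_filter]
    split_ifs with huw
    · by_contra hw
      exact (D.le_max' w (Finset.mem_filter.mpr ⟨hmem hw, hw⟩)).not_gt huw
    · rfl
  have := h u hpos
  rw [countP_dvd_eq_count_add_countP_dvd_filter_lt hs,
    countP_dvd_eq_count_add_countP_dvd_filter_lt ht, habove] at this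
  exact hu (by omega)

end Multiset

def blockProd (n x : ℕ) : ℕ := ∏ j ∈ range x, (n * x + j + 1)

noncomputable def blockPoly (x : ℕ) : ℚ[X] := ∏ j ∈ range x, (C (x : ℚ) * X + C ((j : ℚ) + 1))

theorem eval_natCast_blockPoly (n x : ℕ) : (blockPoly x).eval (n : ℚ) = blockProd n x := by
  simp only [blockPoly, blockProd, eval_prod, eval_add, eval_mul, eval_C, eval_X]
  push_cast
  exact prod_congr rfl fun j _ => by ring

theorem blockPoly_ne_zero (x : ℕ) : blockPoly x ≠ 0 := by
  refine prod_ne_zero_iff.mpr fun j _ h => ?_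
  have h0 := congrArg (eval 0) h
  simp only [eval_add, eval_mul, eval_C, eval_X, mul_zero, zero_add, eval_zero] at h0
  exact Nat.cast_add_one_ne_zero j h0

theorem roots_blockPoly (x : ℕ) :
    (blockPoly x).roots = (range x).val.map fun j : ℕ => -((x : ℚ)⁻¹ * ((j : ℚ) + 1)) := by
  have hx : ∀ j ∈ (range x).val, (x : ℚ) ≠ 0 := fun j hj =>
    Nat.cast_ne_zero.mpr (Nat.ne_zero_of_lt (Finset.mem_range.mp hj))
  rw [blockPoly, roots_prod _ _ (blockPoly_ne_zero x), ← Multiset.bind_singleton]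
  exact Multiset.bind_congr fun j hj => roots_C_mul_X_add_C _ (hx j hj)

theorem card_filter_range_eq_mul_eq_ite {x : ℕ} (hx : 0 < x) (v : ℕ) :
    #{j ∈ range x | x = (j + 1) * v} = if v ∣ x then 1 else 0 := by
  split_ifs with hvx
  · obtain ⟨a, rfl⟩ := hvx
    have hv : 0 < v := Nat.pos_of_mul_pos_right hx
    have ha : 0 < a := Nat.pos_of_mul_pos_left hx
    refine card_eq_one.mpr ⟨a - 1, ext fun j => ?_⟩
    simp only [mem_filter, mem_range, mem_singleton]
    constructor
    · rintro ⟨-, hj⟩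
      have := Nat.eq_of_mul_eq_mul_left hv (hj.trans (mul_comm _ _))
      omega
    · rintro rfl
      refine ⟨?_, by rw [Nat.sub_add_cancel ha, mul_comm]⟩
      have := Nat.le_mul_of_pos_left a hv
      omega
  · exact card_eq_zero.mpr <| filter_eq_empty_iff.mpr fun j _ hj =>
      hvx (Dvd.intro_left _ hj.symm)

theorem count_roots_blockPoly {x : ℕ} (hx : 0 < x) (v : ℕ) :
    (blockPoly x).roots.count (-(v : ℚ)⁻¹) = if v ∣ x then 1 else 0 := by
  have hroot : ∀ j : ℕ, -(v : ℚ)⁻¹ = -((x : ℚ)⁻¹ * (j + 1)) ↔ x = (j + 1) * v := by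
    intro j
    rw [neg_inj, inv_eq_iff_eq_inv, mul_inv, inv_inv, ← div_eq_mul_inv,
      eq_div_iff (Nat.cast_add_one_ne_zero j), eq_comm, mul_comm]
    exact_mod_cast Iff.rfl
  rw [roots_blockPoly, Multiset.count_map, ← card_filter_range_eq_mul_eq_ite hx, ← filter_val]
  simp only [hroot]
  rfl

theorem count_roots_prod_map_blockPoly {s : Multiset ℕ} (hs : 0 ∉ s) (v : ℕ) :
    (s.map blockPoly).prod.roots.count (-(v : ℚ)⁻¹) = s.countP (v ∣ ·) := by
  induction s using Multiset.induction_on with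
  | empty => simp
  | cons x s ih =>
    obtain ⟨hx, hs⟩ : x ≠ 0 ∧ 0 ∉ s := by simpa [eq_comm] using hs
    have hne : blockPoly x * (s.map blockPoly).prod ≠ 0 :=
      mul_ne_zero (blockPoly_ne_zero x) (Multiset.prod_ne_zero (by simp [blockPoly_ne_zero]))
    rw [Multiset.map_cons, Multiset.prod_cons, roots_mul hne, Multiset.count_add,
      count_roots_blockPoly (Nat.pos_of_ne_zero hx), ih hs, Multiset.countP_cons, add_comm]

theorem eval_natCast_prod_map_blockPoly (s : Multiset ℕ) (n : ℕ) :
    (s.map blockPoly).prod.eval (n : ℚ) = (s.map (blockProd n)).prod := by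
  simp [eval_multiset_prod, Multiset.map_map, eval_natCast_blockPoly]

theorem prod_map_blockProd_eq_iff {s t : Multiset ℕ} (hs : 0 ∉ s) (ht : 0 ∉ t) :
    (∀ n, (s.map (blockProd n)).prod = (t.map (blockProd n)).prod) ↔ s = t := by
  refine ⟨fun h => ?_, by rintro rfl _; rfl⟩
  have hpoly : (s.map blockPoly).prod = (t.map blockPoly).prod :=
    eq_of_infinite_eval_eq _ _ <| Set.infinite_of_injective_forall_mem Nat.cast_injective fun n => by
      simp only [Set.mem_ofPred_eq, eval_natCast_prod_map_blockPoly, h]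
  refine Multiset.eq_of_forall_countP_dvd_eq hs ht fun v _ => ?_
  rw [← count_roots_prod_map_blockPoly hs, ← count_roots_prod_map_blockPoly ht, hpoly]

theorem circuit_factorial_identity_iff_balanced_general {m k : ℕ}
    (b : Fin m → ℕ) (c : Fin k → ℕ)
    (hb : ∀ i, 0 < b i) (hc : ∀ i, 0 < c i) :
    (∀ n : ℕ, (∏ i, ∏ j ∈ Finset.range (b i), (n * b i + j + 1)) =
              (∏ i, ∏ j ∈ Finset.range (c i), (n * c i + j + 1))) ↔
    Multiset.map b Finset.univ.val = Multiset.map c Finset.univ.val := by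
  have hb0 : 0 ∉ Multiset.map b univ.val := by simpa [eq_comm] using fun i => (hb i).ne'
  have hc0 : 0 ∉ Multiset.map c univ.val := by simpa [eq_comm] using fun i => (hc i).ne'
  simpa only [Multiset.map_map, Function.comp_def, blockProd, prod_map_val] using
    prod_map_blockProd_eq_iff hb0 hc0

/-- Let `b₀,…,b_{m-1}` and `c₀,…,c_{k-1}` be positive integers with equal sums.
Then the identity `∏_i ∏_{j=1}^{bᵢ} (n bᵢ + j) = ∏_i ∏_{j=1}^{cᵢ} (n cᵢ + j)` holds
for all natural numbers `n` if and only if the multiset `{b₀,…,b_{m-1}}` equals the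
multiset `{c₀,…,c_{k-1}}`. -/
theorem circuit_factorial_identity_iff_balanced {m k : ℕ}
    (b : Fin m → ℕ) (c : Fin k → ℕ)
    (hb : ∀ i, 0 < b i) (hc : ∀ i, 0 < c i)
    (hsum : ∑ i, b i = ∑ i, c i) :
    (∀ n : ℕ, (∏ i, ∏ j ∈ Finset.range (b i), (n * b i + j + 1)) =
              (∏ i, ∏ j ∈ Finset.range (c i), (n * c i + j + 1))) ↔
    Multiset.map b Finset.univ.val = Multiset.map c Finset.univ.val :=
  circuit_factorial_identity_iff_balanced_general b c hb hc
end

section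
/- Let b = (b_0, ..., b_d) be an integer vector with b_j > 0 for j < m and b_j < 0 for j ≥ m, and suppose there exists an integer vector c = (c_0,...,c_d) and a nonzero constant λ ∈ ℂ such that the function γ(n) = λ^{-n} · (∏_{j ≥ m} (-c_j - n b_j - 1)!) / (∏_{j < m} (c_j + n b_j)!) is a polynomial function of n for n ∈ ℕ sufficiently large. Then max{b_j : j < m} = max{-b_j : j ≥ m}. -/
/-!
Over `n ↦ n + 1` the factorials of `γ` grow by polynomial factors:
`λ γ(n+1) D(n) = γ(n) N(n)` with `D = ∏_{j<m} ∏_{k<b_j} (c_j + k + 1 + b_j X)` and `N` the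
analogous product over `j ≥ m`. So the polynomial `P` interpolating `γ` satisfies
`λ P(x+1) D(x) = P(x) N(x)` identically. As `P ≠ 0` has finitely many zeros, the coset `x + ℤ` of
a root of `D` must contain a root of `N`, and conversely. A root of the `j`-th block of `D` can be
chosen with exact denominator `b_j`, while every root of the `j'`-th block of `N` has denominator
dividing `-b_{j'}`; thus each `b_j` divides, hence is at most, some `-b_{j'}`, and symmetrically.
-/

open Filter Polynomial

section FactorialProduct

variable (K : Type*) [Field K] {ι : Type*}

/-- `∏_{k < β} (a + k + 1 + β X)`: the factor by which `(a + n β)!` grows from `n` to `n + 1`. -/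
noncomputable def factorialStepPoly (a β : ℤ) : K[X] :=
  (ascPochhammer K β.toNat).comp (C ((a + 1 : ℤ) : K) + C (β : K) * X)

noncomputable def factorialProd (s : Finset ι) (a β : ι → ℤ) (n : ℕ) : K :=
  ∏ i ∈ s, ((a i + n * β i).toNat.factorial : K)

variable {K}

theorem natCast_factorial_toNat_add {a β : ℤ} (ha : 0 ≤ a) (hβ : 0 ≤ β) :
    ((a + β).toNat.factorial : K) =
      a.toNat.factorial * (ascPochhammer K β.toNat).eval ((a + 1 : ℤ) : K) := by
  rw [Int.toNat_add ha hβ, ← Nat.factorial_mul_ascFactorial, Nat.cast_mul,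
    ← ascPochhammer_nat_eq_natCast_ascFactorial]
  congr 2
  push_cast
  rw [← Int.cast_natCast, Int.toNat_of_nonneg ha]

theorem factorialProd_succ {s : Finset ι} {a β : ι → ℤ} {n : ℕ} (hβ : ∀ i ∈ s, 0 ≤ β i)
    (ha : ∀ i ∈ s, 0 ≤ a i + n * β i) :
    factorialProd K s a β (n + 1) =
      factorialProd K s a β n * (∏ i ∈ s, factorialStepPoly K (a i) (β i)).eval (n : K) := by
  rw [factorialProd, factorialProd, eval_prod, ← Finset.prod_mul_distrib]
  refine Finset.prod_congr rfl fun i hi => ?_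
  rw [show a i + ((n + 1 : ℕ) : ℤ) * β i = a i + n * β i + β i by push_cast; ring,
    natCast_factorial_toNat_add (ha i hi) (hβ i hi), factorialStepPoly, eval_comp]
  congr 2
  simp only [eval_add, eval_C, eval_mul, eval_X]
  push_cast
  ring

theorem factorialProd_ne_zero [CharZero K] (s : Finset ι) (a β : ι → ℤ) (n : ℕ) :
    factorialProd K s a β n ≠ 0 :=
  Finset.prod_ne_zero_iff.2 fun _ _ => Nat.cast_ne_zero.2 (Nat.factorial_ne_zero _)

theorem eventually_forall_nonneg_add_mul (s : Finset ι) (a : ι → ℤ) {β : ι → ℤ}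
    (hβ : ∀ i ∈ s, 0 < β i) : ∀ᶠ n : ℕ in atTop, ∀ i ∈ s, 0 ≤ a i + n * β i := by
  refine (eventually_all_finset s).2 fun i hi => eventually_atTop.2 ⟨(-a i).toNat, fun n hn => ?_⟩
  have : (n : ℤ) ≤ n * β i := le_mul_of_one_le_right n.cast_nonneg (hβ i hi)
  omega

end FactorialProduct

section ShiftIdentity

variable {K : Type*} [Field K] [CharZero K] {ι : Type*} {s t : Finset ι} {a β a' β' : ι → ℤ}
  {lam : K} {P : K[X]}

theorem Polynomial.eq_of_eventually_eval_natCast_eq {p q : K[X]}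
    (h : ∀ᶠ n : ℕ in atTop, p.eval (n : K) = q.eval (n : K)) : p = q := by
  obtain ⟨N, hN⟩ := eventually_atTop.1 h
  refine eq_of_infinite_eval_eq p q
    (Set.infinite_of_injective_forall_mem (f := fun k : ℕ => ((N + k : ℕ) : K)) ?_ ?_)
  · exact Nat.cast_injective.comp (add_right_injective N)
  · exact fun k => hN (N + k) (Nat.le_add_right N k)

theorem ne_zero_of_eventually_eval_eq_factorialProd_div (hlam : lam ≠ 0)
    (hP : ∀ᶠ n : ℕ in atTop,
      lam⁻¹ ^ n * factorialProd K t a' β' n / factorialProd K s a β n = P.eval (n : K)) :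
    P ≠ 0 := by
  rintro rfl
  obtain ⟨n, hn⟩ := hP.exists
  simp [factorialProd_ne_zero, hlam] at hn

theorem shift_identity_of_eventually_eval_eq_factorialProd_div (hlam : lam ≠ 0)
    (hβ : ∀ i ∈ s, 0 < β i) (hβ' : ∀ i ∈ t, 0 < β' i)
    (hP : ∀ᶠ n : ℕ in atTop,
      lam⁻¹ ^ n * factorialProd K t a' β' n / factorialProd K s a β n = P.eval (n : K))
    (x : K) :
    lam * P.eval (x + 1) * (∏ i ∈ s, factorialStepPoly K (a i) (β i)).eval x =
      P.eval x * (∏ i ∈ t, factorialStepPoly K (a' i) (β' i)).eval x := by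
  suffices C lam * P.comp (X + 1) * ∏ i ∈ s, factorialStepPoly K (a i) (β i) =
      P * ∏ i ∈ t, factorialStepPoly K (a' i) (β' i) by
    simpa using congr_arg (eval x) this
  refine eq_of_eventually_eval_natCast_eq ?_
  filter_upwards [hP, (tendsto_add_atTop_nat 1).eventually hP,
    eventually_forall_nonneg_add_mul s a hβ, eventually_forall_nonneg_add_mul t a' hβ']
    with n hn hn1 hs ht
  have hG := factorialProd_succ (K := K) (fun i hi => (hβ i hi).le) hs
  have hF := factorialProd_succ (K := K) (fun i hi => (hβ' i hi).le) ht
  have hB : (∏ i ∈ s, factorialStepPoly K (a i) (β i)).eval (n : K) ≠ 0 :=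
    right_ne_zero_of_mul (hG ▸ factorialProd_ne_zero (K := K) s a β (n + 1))
  simp only [eval_mul, eval_C, eval_comp, eval_add, eval_X, eval_one]
  rw [← hn, ← Nat.cast_succ, ← hn1, hF, hG, pow_succ]
  field_simp [factorialProd_ne_zero, hlam]

end ShiftIdentity

section RootChasing

variable {K : Type*} [Field K] [CharZero K] {P A B : K[X]} {lam : K}

omit [CharZero K] in
theorem Polynomial.eq_zero_of_injective_of_forall_isRoot {p : K[X]} {f : ℕ → K}
    (hf : Function.Injective f) (h : ∀ n, p.IsRoot (f n)) : p = 0 :=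
  p.eq_zero_of_infinite_isRoot (Set.infinite_of_injective_forall_mem hf h)

/-- The zeros of `P` would run off to `-∞` along `α + ℤ` unless a root of `A` stops them. -/
theorem exists_isRoot_add_int_of_isRoot_right (hP : P ≠ 0)
    (h : ∀ x, lam * P.eval (x + 1) * B.eval x = P.eval x * A.eval x) {α : K}
    (hα : B.IsRoot α) : ∃ k : ℤ, A.IsRoot (α + k) := by
  by_contra! hA
  have step (y : K) (hy : lam * P.eval (y + 1) * B.eval y = 0) (hAy : ¬A.IsRoot y) :
      P.IsRoot y :=
    (mul_eq_zero.1 ((h y).symm.trans hy)).resolve_right hAy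
  have hzero (n : ℕ) : P.IsRoot (α - n) := by
    induction n with
    | zero => exact step _ (by simp [hα.eq_zero]) (by simpa using hA 0)
    | succ n ih =>
      refine step _ ?_ (by simpa [sub_eq_add_neg] using hA (-(n + 1 : ℕ)))
      rw [Nat.cast_succ, sub_add_eq_sub_sub, sub_add_cancel, ih.eq_zero, mul_zero, zero_mul]
  exact hP (eq_zero_of_injective_of_forall_isRoot
    ((sub_right_injective (b := α)).comp Nat.cast_injective) hzero)

/-- The zeros of `P` would run off to `+∞` along `β + ℤ` unless a root of `B` stops them. -/
theorem exists_isRoot_add_int_of_isRoot_left (hlam : lam ≠ 0) (hP : P ≠ 0)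
    (h : ∀ x, lam * P.eval (x + 1) * B.eval x = P.eval x * A.eval x) {β : K}
    (hβ : A.IsRoot β) : ∃ k : ℤ, B.IsRoot (β + k) := by
  by_contra! hB
  have step (y : K) (hy : P.eval y * A.eval y = 0) (hBy : ¬B.IsRoot y) : P.IsRoot (y + 1) :=
    (mul_eq_zero.1 ((mul_eq_zero.1 ((h y).trans hy)).resolve_right hBy)).resolve_left hlam
  have hzero (n : ℕ) : P.IsRoot (β + n + 1) := by
    induction n with
    | zero => simpa using step β (by simp [hβ.eq_zero]) (by simpa using hB 0)
    | succ n ih =>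
      rw [Nat.cast_succ, ← add_assoc]
      exact step _ (by rw [ih.eq_zero, zero_mul]) (by simpa [add_assoc] using hB (n + 1 : ℕ))
  exact hP (eq_zero_of_injective_of_forall_isRoot
    ((add_left_injective 1).comp ((add_right_injective β).comp Nat.cast_injective)) hzero)

end RootChasing

section Roots

variable {K : Type*} [Field K] [CharZero K]

omit [CharZero K] in
theorem exists_mul_eq_intCast_of_isRoot_factorialStepPoly {a β : ℤ} {x : K}
    (hx : (factorialStepPoly K a β).IsRoot x) : ∃ r : ℤ, (β : K) * x = r := by
  simp only [IsRoot, factorialStepPoly, eval_comp, eval_add, eval_C, eval_mul, eval_X] at hx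
  obtain ⟨k, -, hk⟩ := (ascPochhammer_eval_eq_zero_iff _ _).1 hx
  exact ⟨-(a + 1 + k), by push_cast at hk ⊢; linear_combination hk⟩

/-- Choosing `k ≡ -a mod β` makes the root `-(a + 1 + k) / β` have exact denominator `β`. -/
theorem exists_isRoot_factorialStepPoly_isCoprime (a : ℤ) {β : ℤ} (hβ : 0 < β) :
    ∃ (x : K) (r : ℤ), (factorialStepPoly K a β).IsRoot x ∧ IsCoprime β r ∧ (β : K) * x = r := by
  set k := (-a % β).toNat
  have hk : (k : ℤ) = -a % β := Int.toNat_of_nonneg (Int.emod_nonneg _ hβ.ne')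
  have hkβ : k < β.toNat := by have := Int.emod_lt_of_pos (-a) hβ; omega
  have hβK : (β : K) ≠ 0 := Int.cast_ne_zero.2 hβ.ne'
  refine ⟨((-(a + 1 + k) : ℤ) : K) / β, -(a + 1 + k), ?_, ⟨-a / β, -1, ?_⟩, ?_⟩
  · have hroot : ((a + 1 : ℤ) : K) + β * (((-(a + 1 + k) : ℤ) : K) / β) = -k := by
      field_simp
      push_cast
      ring
    simp only [IsRoot, factorialStepPoly, eval_comp, eval_add, eval_C, eval_mul, eval_X, hroot]
    exact ascPochhammer_eval_neg_coe_nat_of_lt hkβ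
  · rw [hk, Int.emod_def]
    ring
  · field_simp

theorem dvd_of_isCoprime_of_mul_eq_intCast {β₀ r₀ β r k : ℤ} {x : K} (hcop : IsCoprime β₀ r₀)
    (h₀ : (β₀ : K) * x = r₀) (h : (β : K) * (x + k) = r) : β₀ ∣ β := by
  refine hcop.dvd_of_dvd_mul_right ⟨r - β * k, ?_⟩
  have : ((β * r₀ : ℤ) : K) = ((β₀ * (r - β * k) : ℤ) : K) := by
    push_cast
    linear_combination β₀ * h - β * h₀
  exact_mod_cast this

end Roots

/-- A root of the `s`-blocks with exact denominator `β i` stays, after an integer shift, a root of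
some `t`-block, whose roots have denominator dividing `β' j`; hence `β i ∣ β' j`. -/
theorem sup'_le_sup'_of_forall_isRoot_prod_factorialStepPoly (K : Type*) [Field K] [CharZero K]
    {ι : Type*} {s t : Finset ι} (hs : s.Nonempty) (ht : t.Nonempty) {a β a' β' : ι → ℤ}
    (hβ : ∀ i ∈ s, 0 < β i) (hβ' : ∀ j ∈ t, 0 < β' j)
    (hshift : ∀ x : K, (∏ i ∈ s, factorialStepPoly K (a i) (β i)).IsRoot x →
      ∃ k : ℤ, (∏ j ∈ t, factorialStepPoly K (a' j) (β' j)).IsRoot (x + k)) :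
    s.sup' hs β ≤ t.sup' ht β' := by
  refine Finset.sup'_le hs β fun i hi => ?_
  obtain ⟨x, r, hx, hcop, hxr⟩ :=
    exists_isRoot_factorialStepPoly_isCoprime (K := K) (a i) (hβ i hi)
  obtain ⟨k, hk⟩ := hshift x ((isRoot_prod _ _ _).2 ⟨i, hi, hx⟩)
  obtain ⟨j, hj, hjk⟩ := (isRoot_prod _ _ _).1 hk
  obtain ⟨r', hr'⟩ := exists_mul_eq_intCast_of_isRoot_factorialStepPoly hjk
  exact (Int.le_of_dvd (hβ' j hj) (dvd_of_isCoprime_of_mul_eq_intCast hcop hxr hr')).trans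
    (t.le_sup' β' hj)

theorem max_positive_eq_max_negative_of_polynomial_gamma_general
    {d m : ℕ}
    (b : Fin (d + 1) → ℤ)
    (hbpos : ∀ j : Fin (d + 1), (j : ℕ) < m → 0 < b j)
    (hbneg : ∀ j : Fin (d + 1), m ≤ (j : ℕ) → b j < 0)
    (c : Fin (d + 1) → ℤ) (lam : ℂ) (hlam : lam ≠ 0)
    (γ : ℕ → ℂ)
    (hγ : γ = fun n : ℕ => (lam⁻¹) ^ n *
      (∏ j ∈ Finset.univ.filter (fun j : Fin (d + 1) => m ≤ (j : ℕ)),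
        (Nat.factorial ((-c j - (n : ℤ) * b j - 1).toNat) : ℂ)) /
      (∏ j ∈ Finset.univ.filter (fun j : Fin (d + 1) => (j : ℕ) < m),
        (Nat.factorial ((c j + (n : ℤ) * b j).toNat) : ℂ)))
    (hpoly : ∃ P : Polynomial ℂ, ∀ᶠ n : ℕ in atTop, γ n = P.eval (n : ℂ))
    (hne1 : (Finset.univ.filter (fun j : Fin (d + 1) => (j : ℕ) < m)).Nonempty)
    (hne2 : (Finset.univ.filter (fun j : Fin (d + 1) => m ≤ (j : ℕ))).Nonempty) :
    (Finset.univ.filter (fun j : Fin (d + 1) => (j : ℕ) < m)).sup' hne1 (fun j => b j) =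
    (Finset.univ.filter (fun j : Fin (d + 1) => m ≤ (j : ℕ))).sup' hne2 (fun j => - b j) := by
  obtain ⟨P, hP⟩ := hpoly
  set S₁ := Finset.univ.filter (fun j : Fin (d + 1) => (j : ℕ) < m)
  set S₂ := Finset.univ.filter (fun j : Fin (d + 1) => m ≤ (j : ℕ))
  have hb₁ : ∀ j ∈ S₁, 0 < b j := fun j hj => hbpos j (Finset.mem_filter.1 hj).2
  have hb₂ : ∀ j ∈ S₂, 0 < -b j := fun j hj => neg_pos.2 (hbneg j (Finset.mem_filter.1 hj).2)
  have hP' : ∀ᶠ n : ℕ in atTop,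
      lam⁻¹ ^ n * factorialProd ℂ S₂ (fun j => -c j - 1) (fun j => -b j) n /
        factorialProd ℂ S₁ c b n = P.eval (n : ℂ) := by
    refine hP.mono fun n hn => ?_
    rw [← hn, hγ, factorialProd, factorialProd]
    congr 2
    refine Finset.prod_congr rfl fun j _ => ?_
    ring_nf
  have hP0 := ne_zero_of_eventually_eval_eq_factorialProd_div hlam hP'
  have hshift := shift_identity_of_eventually_eval_eq_factorialProd_div hlam hb₁ hb₂ hP'
  exact le_antisymm
    (sup'_le_sup'_of_forall_isRoot_prod_factorialStepPoly ℂ hne1 hne2 hb₁ hb₂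
      fun _ hx => exists_isRoot_add_int_of_isRoot_right hP0 hshift hx)
    (sup'_le_sup'_of_forall_isRoot_prod_factorialStepPoly ℂ hne2 hne1 hb₂ hb₁
      fun _ hx => exists_isRoot_add_int_of_isRoot_left hlam hP0 hshift hx)

/-- Let `b = (b₀,…,b_d)` be an integer vector with `b_j > 0` for `j < m` and `b_j < 0` for
`j ≥ m`, and suppose there are an integer vector `c` and a nonzero constant `λ ∈ ℂ` such
that `γ(n) = λ^{-n} · ∏_{j≥m} (-c_j - n b_j - 1)! / ∏_{j<m} (c_j + n b_j)!` is a polynomial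
function of `n` for all sufficiently large `n`. Then `max{b_j : j < m} = max{-b_j : j ≥ m}`. -/
theorem max_positive_eq_max_negative_of_polynomial_gamma
    {d m : ℕ} (hm : 0 < m) (hmd : m ≤ d)
    (b : Fin (d + 1) → ℤ)
    (hbpos : ∀ j : Fin (d + 1), (j : ℕ) < m → 0 < b j)
    (hbneg : ∀ j : Fin (d + 1), m ≤ (j : ℕ) → b j < 0)
    (c : Fin (d + 1) → ℤ) (lam : ℂ) (hlam : lam ≠ 0)
    (γ : ℕ → ℂ)
    (hγ : γ = fun n : ℕ => (lam⁻¹) ^ n *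
      (∏ j ∈ Finset.univ.filter (fun j : Fin (d + 1) => m ≤ (j : ℕ)),
        (Nat.factorial ((-c j - (n : ℤ) * b j - 1).toNat) : ℂ)) /
      (∏ j ∈ Finset.univ.filter (fun j : Fin (d + 1) => (j : ℕ) < m),
        (Nat.factorial ((c j + (n : ℤ) * b j).toNat) : ℂ)))
    (hpoly : ∃ P : Polynomial ℂ, ∀ᶠ n : ℕ in atTop, γ n = P.eval (n : ℂ))
    (hne1 : (Finset.univ.filter (fun j : Fin (d + 1) => (j : ℕ) < m)).Nonempty)
    (hne2 : (Finset.univ.filter (fun j : Fin (d + 1) => m ≤ (j : ℕ))).Nonempty) :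
    (Finset.univ.filter (fun j : Fin (d + 1) => (j : ℕ) < m)).sup' hne1 (fun j => b j) =
    (Finset.univ.filter (fun j : Fin (d + 1) => m ≤ (j : ℕ))).sup' hne2 (fun j => - b j) :=
  max_positive_eq_max_negative_of_polynomial_gamma_general b hbpos hbneg c lam hlam γ hγ hpoly hne1
    hne2
end

section
/- A circuit configuration A (a d × (d+1) integer matrix of rank d whose integer kernel is spanned by a vector b with all coordinates nonzero, and with (1,...,1) in the row span) is balanced if and only if A is affinely isomorphic to an essential Cayley configuration. -/
open Pointwise

/-- An integer vector is balanced if its positive part is a coordinate permutation of its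
negative part, equivalently there is a permutation `σ` with `b ∘ σ = -b`. -/
def BalancedVec {ι : Type*} (b : ι → ℤ) : Prop :=
  ∃ σ : Equiv.Perm ι, ∀ i, b (σ i) = - b i

/-- The point of the Cayley configuration corresponding to the point `p` of the `i`-th
configuration: `(e_i, p) ∈ ℤ^{r+1} × ℤ^r`. -/
def cayleyPoint {r : ℕ} (i : Fin (r + 1)) (p : Fin r → ℤ) : Fin (r + 1) ⊕ Fin r → ℤ :=
  Sum.elim (fun k => if k = i then 1 else 0) p

/-- The configurations `A₀,…,A_r` in `ℤ^r` (with `Aᵢ` given by the points `a i j`) are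
essential: for every proper subset `I` of `{0,…,r}`, the Minkowski sum `Σ_{i∈I} Aᵢ` has
affine dimension at least `|I|`. -/
def IsEssentialCayley {r : ℕ} (n : Fin (r + 1) → ℕ)
    (a : (i : Fin (r + 1)) → Fin (n i) → (Fin r → ℤ)) : Prop :=
  ∀ I : Finset (Fin (r + 1)), I ⊂ Finset.univ →
    I.card ≤ Module.finrank ℚ (vectorSpan ℚ
      (∑ i ∈ I, ((fun p : Fin r → ℤ => fun k => (p k : ℚ)) '' Set.range (a i))))

open Module Submodule

/-!
A circuit is determined up to linear isomorphism by its kernel line: if two families indexed by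
the same finite set span their ambient spaces and have the same line of linear relations, both
spaces are the quotient of the coefficient space by that line, so a linear isomorphism carries
one family to the other.

In a Cayley configuration every linear relation sums to zero over each block `Aᵢ`. For a circuit
Cayley configuration of dimension `2r + 1`, essentiality gives every block at least two points,
and counting gives exactly two, so the entries of the kernel vector pair up as `bⱼ = -bⱼ'`.
Conversely, if `b` is balanced with positive entries `c₀, …, c_r`, choose `w₀, …, w_r ∈ ℤ^r`
whose only relation is `∑ cᵢ wᵢ = 0`. The Cayley configuration of the segments `{wᵢ, 0}` has
kernel line spanned by `(cᵢ, -cᵢ)ᵢ`, so it is isomorphic to the given circuit, and it is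
essential because every proper subfamily of the `wᵢ` is linearly independent.
-/

theorem LinearMap.exists_linearEquiv_apply_eq_of_ker_eq {R M V W : Type*} [Ring R]
    [AddCommGroup M] [Module R M] [AddCommGroup V] [Module R V] [AddCommGroup W] [Module R W]
    {φ : M →ₗ[R] V} {ψ : M →ₗ[R] W} (hφ : Function.Surjective φ) (hψ : Function.Surjective ψ)
    (h : LinearMap.ker φ = LinearMap.ker ψ) : ∃ L : V ≃ₗ[R] W, ∀ x, L (φ x) = ψ x := by
  refine ⟨(φ.quotKerEquivOfSurjective hφ).symm ≪≫ₗ Submodule.quotEquivOfEq _ _ h ≪≫ₗ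
    ψ.quotKerEquivOfSurjective hψ, fun x => ?_⟩
  rw [LinearEquiv.trans_apply, LinearEquiv.trans_apply,
    ← φ.quotKerEquivOfSurjective_apply_mk hφ x, LinearEquiv.symm_apply_apply]
  rfl

theorem LinearMap.surjective_of_ker_eq_span_singleton {K M V : Type*} [Field K]
    [AddCommGroup M] [Module K M] [FiniteDimensional K M] [AddCommGroup V] [Module K V]
    [FiniteDimensional K V] {f : M →ₗ[K] V} {b : M} (hb : b ≠ 0) (hf : LinearMap.ker f = K ∙ b)
    (hdim : finrank K V + 1 = finrank K M) : Function.Surjective f := by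
  rw [← LinearMap.range_eq_top]
  apply Submodule.eq_top_of_finrank_eq
  have := f.finrank_range_add_finrank_ker
  rw [hf, finrank_span_singleton hb] at this
  omega

section LinearCombination

variable {K ι V : Type*} [Field K] [Fintype ι] [AddCommGroup V] [Module K V]

theorem exists_linearEquiv_apply_eq_of_ker_linearCombination_eq {W : Type*} [FiniteDimensional K V]
    [AddCommGroup W] [Module K W] [FiniteDimensional K W] {v : ι → V} {u : ι → W} {b : ι → K}
    (hb : b ≠ 0) (hv : LinearMap.ker (Fintype.linearCombination K v) = K ∙ b)
    (hu : LinearMap.ker (Fintype.linearCombination K u) = K ∙ b)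
    (hV : finrank K V + 1 = Fintype.card ι) (hW : finrank K W + 1 = Fintype.card ι) :
    ∃ L : V ≃ₗ[K] W, ∀ i, L (v i) = u i := by
  classical
  obtain ⟨L, hL⟩ := LinearMap.exists_linearEquiv_apply_eq_of_ker_eq
    (LinearMap.surjective_of_ker_eq_span_singleton hb hv (by simpa using hV))
    (LinearMap.surjective_of_ker_eq_span_singleton hb hu (by simpa using hW)) (hv.trans hu.symm)
  refine ⟨L, fun i => ?_⟩
  simpa using hL (Pi.single i 1)

theorem ker_linearCombination_comp_equiv {κ : Type*} [Fintype κ] {u : κ → V} {β : κ → K}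
    (hu : LinearMap.ker (Fintype.linearCombination K u) = K ∙ β) (e : ι ≃ κ) :
    LinearMap.ker (Fintype.linearCombination K (u ∘ e)) = K ∙ (β ∘ e) := by
  ext f
  have hf : f ∈ LinearMap.ker (Fintype.linearCombination K (u ∘ e)) ↔
      f ∘ e.symm ∈ LinearMap.ker (Fintype.linearCombination K u) := by
    simp only [LinearMap.mem_ker, Fintype.linearCombination_apply, Function.comp_apply]
    rw [← e.symm.sum_comp]
    simp
  rw [hf, hu, mem_span_singleton, mem_span_singleton]
  constructor <;> rintro ⟨t, ht⟩ <;> refine ⟨t, ?_⟩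
  · rw [← Equiv.comp_symm_eq] at ht
    rw [← ht]
    rfl
  · rw [← ht]
    ext
    simp

theorem linearIndepOn_of_ker_linearCombination_eq {v : ι → V} {c : ι → K} (hc : ∀ i, c i ≠ 0)
    (hv : LinearMap.ker (Fintype.linearCombination K v) = K ∙ c) {I : Finset ι}
    (hI : I ≠ Finset.univ) : LinearIndepOn K v I := by
  classical
  obtain ⟨i₀, hi₀⟩ : ∃ i₀, i₀ ∉ I := by simpa [Finset.eq_univ_iff_forall] using hI
  rw [linearIndepOn_finset_iff]
  intro f hf
  have hker : (fun j => if j ∈ I then f j else 0) ∈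
      LinearMap.ker (Fintype.linearCombination K v) := by
    simpa [Fintype.linearCombination_apply, ite_smul, Finset.sum_ite_mem] using hf
  obtain ⟨t, ht⟩ := mem_span_singleton.mp (hv ▸ hker)
  have ht₀ : t = 0 := by simpa [hi₀, hc i₀] using congrFun ht i₀
  intro i hi
  simpa [ht₀, hi] using (congrFun ht i).symm

end LinearCombination

theorem Matrix.linearCombination_col {K m n : Type*} [CommSemiring K] [Fintype n]
    [DecidableEq n] (M : Matrix m n K) : Fintype.linearCombination K M.col = M.mulVecLin := by
  ext j i
  simp

theorem Matrix.ker_linearCombination_col {K m n : Type*} [CommRing K] [Fintype n]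
    {M : Matrix m n K} {b : n → K} (hb : M.mulVec b = 0)
    (hM : ∀ v, M.mulVec v = 0 → ∃ t : K, v = t • b) :
    LinearMap.ker (Fintype.linearCombination K M.col) = K ∙ b := by
  classical
  ext f
  rw [M.linearCombination_col, LinearMap.mem_ker, Matrix.mulVecLin_apply, mem_span_singleton]
  constructor
  · intro hf
    obtain ⟨t, rfl⟩ := hM f hf
    exact ⟨t, rfl⟩
  · rintro ⟨t, rfl⟩
    rw [Matrix.mulVec_smul, hb, smul_zero]

/-- `w₀ = -(c₁, …, c_r)` and `w_{k+1} = c₀ eₖ`, so that `∑ cᵢ wᵢ = 0` is the only relation. -/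
def circuitVectors {R : Type*} [Ring R] {r : ℕ} (c : Fin (r + 1) → R) (i : Fin (r + 1))
    (k : Fin r) : R :=
  if i = 0 then -c k.succ else if i = k.succ then c 0 else 0

theorem cast_circuitVectors {R : Type*} [Ring R] {r : ℕ} (c : Fin (r + 1) → ℤ) :
    (fun i k => ((circuitVectors c i k : ℤ) : R)) = circuitVectors fun i => (c i : R) := by
  ext i k
  unfold circuitVectors
  split_ifs <;> simp

theorem sum_mul_circuitVectors {R : Type*} [CommRing R] {r : ℕ} (c μ : Fin (r + 1) → R)
    (k : Fin r) : ∑ i, μ i * circuitVectors c i k = μ k.succ * c 0 - μ 0 * c k.succ := by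
  simp [Fin.sum_univ_succ, circuitVectors, Fin.succ_ne_zero, sub_eq_neg_add]

theorem ker_linearCombination_circuitVectors {K : Type*} [Field K] {r : ℕ}
    {c : Fin (r + 1) → K} (hc : c 0 ≠ 0) :
    LinearMap.ker (Fintype.linearCombination K (circuitVectors c)) = K ∙ c := by
  ext μ
  have hμ : μ ∈ LinearMap.ker (Fintype.linearCombination K (circuitVectors c)) ↔
      ∀ k : Fin r, μ k.succ * c 0 = μ 0 * c k.succ := by
    simp only [LinearMap.mem_ker, Fintype.linearCombination_apply, funext_iff, Finset.sum_apply,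
      Pi.smul_apply, smul_eq_mul, Pi.zero_apply, sum_mul_circuitVectors, sub_eq_zero]
  rw [hμ, mem_span_singleton]
  constructor
  · intro h
    refine ⟨μ 0 / c 0, funext <| Fin.cases (div_mul_cancel₀ _ hc) fun k => ?_⟩
    rw [Pi.smul_apply, smul_eq_mul, div_mul_eq_mul_div, div_eq_iff hc, ← h k]
  · rintro ⟨t, rfl⟩ k
    simp only [Pi.smul_apply, smul_eq_mul]
    ring

theorem cast_cayleyPoint {r : ℕ} (i : Fin (r + 1)) (p : Fin r → ℤ) :
    (fun k => (cayleyPoint i p k : ℚ)) = Sum.elim (Pi.single i 1) fun k => (p k : ℚ) := by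
  ext (k | k) <;> simp [cayleyPoint, Pi.single_apply, apply_ite]

section CayleyRelations

variable {K κ τ : Type*} [Field K] [Fintype κ] [DecidableEq κ]

theorem cayley_linearCombination_inl {β : κ → Type*} [∀ i, Fintype (β i)] (q : Sigma β → τ → K)
    (h : Sigma β → K) (i : κ) :
    (∑ x, h x • Sum.elim (Pi.single x.1 1) (q x)) (Sum.inl i) = ∑ s, h ⟨i, s⟩ := by
  rw [Finset.sum_apply, Fintype.sum_sigma,
    Fintype.sum_eq_single i fun j hj => by simp [Ne.symm hj]]
  simp

theorem cayley_linearCombination_inr {β : κ → Type*} [∀ i, Fintype (β i)] (q : Sigma β → τ → K)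
    (h : Sigma β → K) (k : τ) :
    (∑ x, h x • Sum.elim (Pi.single x.1 1) (q x)) (Sum.inr k) = ∑ x, h x * q x k := by
  simp [Finset.sum_apply]

theorem ker_linearCombination_cayley_pairs (w : κ → τ → K) {c : κ → K}
    (hw : LinearMap.ker (Fintype.linearCombination K w) = K ∙ c) :
    LinearMap.ker (Fintype.linearCombination K
        fun x : Σ _ : κ, Fin 2 => Sum.elim (Pi.single x.1 1) (![w x.1, 0] x.2)) =
      K ∙ fun x => ![c x.1, -c x.1] x.2 := by
  ext h
  have hker : h ∈ LinearMap.ker (Fintype.linearCombination K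
        fun x : Σ _ : κ, Fin 2 => Sum.elim (Pi.single x.1 1) (![w x.1, 0] x.2)) ↔
      (∀ i, h ⟨i, 1⟩ = -h ⟨i, 0⟩) ∧
        (fun i => h ⟨i, 0⟩) ∈ LinearMap.ker (Fintype.linearCombination K w) := by
    simp only [LinearMap.mem_ker, Fintype.linearCombination_apply, funext_iff, Sum.forall,
      cayley_linearCombination_inl, cayley_linearCombination_inr]
    simp [Fin.sum_univ_two, Fintype.sum_sigma, Finset.sum_apply, eq_neg_iff_add_eq_zero,
      add_comm (h ⟨_, 1⟩)]
  rw [hker, hw, mem_span_singleton, mem_span_singleton]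
  constructor
  · rintro ⟨h₁, t, ht⟩
    refine ⟨t, funext fun ⟨i, s⟩ => ?_⟩
    fin_cases s
    · simpa using congrFun ht i
    · simpa [h₁] using congrFun ht i
  · rintro ⟨t, rfl⟩
    exact ⟨fun i => by simp, t, rfl⟩

end CayleyRelations

theorem ker_linearCombination_cayleyPoint_circuitVectors {r : ℕ} {c : Fin (r + 1) → ℤ}
    (hc : c 0 ≠ 0) :
    LinearMap.ker (Fintype.linearCombination ℚ fun x : Σ _ : Fin (r + 1), Fin 2 =>
        fun k => (cayleyPoint x.1 (![circuitVectors c x.1, 0] x.2) k : ℚ)) =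
      ℚ ∙ fun x => ![(c x.1 : ℚ), -(c x.1 : ℚ)] x.2 := by
  have hcast : (fun x : Σ _ : Fin (r + 1), Fin 2 =>
      fun k => (cayleyPoint x.1 (![circuitVectors c x.1, 0] x.2) k : ℚ)) =
      fun x => Sum.elim (Pi.single x.1 1) (![circuitVectors (fun i => (c i : ℚ)) x.1, 0] x.2) := by
    ext ⟨i, s⟩ : 1
    rw [cast_cayleyPoint]
    fin_cases s <;> ext (k | k) <;> simp [← cast_circuitVectors]
  rw [hcast]
  exact ker_linearCombination_cayley_pairs (circuitVectors fun i => (c i : ℚ))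
    (c := fun i => (c i : ℚ)) (ker_linearCombination_circuitVectors (Int.cast_ne_zero.mpr hc))

theorem Set.mem_finsetSum_of_zero_mem {ι M : Type*} [AddCommMonoid M] [DecidableEq ι]
    {S : ι → Set M} {I : Finset ι} (h₀ : ∀ i ∈ I, (0 : M) ∈ S i) {j : ι} (hj : j ∈ I) {x : M}
    (hx : x ∈ S j) : x ∈ ∑ i ∈ I, S i := by
  simpa [hj] using Set.finsetSum_mem_finsetSum I S (Pi.single j x) fun i hi => by
    rcases eq_or_ne i j with rfl | hij
    · simpa using hx
    · simpa [hij] using h₀ i hi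

theorem isEssentialCayley_pairs_of_ker_linearCombination_eq {r : ℕ}
    (w : Fin (r + 1) → Fin r → ℤ)
    {c : Fin (r + 1) → ℚ} (hc : ∀ i, c i ≠ 0)
    (hw : LinearMap.ker (Fintype.linearCombination ℚ fun i k => (w i k : ℚ)) = ℚ ∙ c) :
    IsEssentialCayley (fun _ => 2) fun i => ![w i, 0] := by
  classical
  intro I hI
  set S : Fin (r + 1) → Set (Fin r → ℚ) :=
    fun i => (fun p : Fin r → ℤ => fun k => (p k : ℚ)) '' Set.range ![w i, 0]
  have hS : ∀ i, S i = {0, fun k => (w i k : ℚ)} := by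
    intro i
    simp [S, Matrix.range_cons, Set.image_insert_eq, Pi.zero_def]
  have h₀ : ∀ i ∈ I, (0 : Fin r → ℚ) ∈ S i := fun i _ => by simp [hS]
  have hspan : span ℚ (Set.range fun i : (I : Set (Fin (r + 1))) => fun k => (w i k : ℚ)) ≤
      vectorSpan ℚ (∑ i ∈ I, S i) := by
    rw [span_le]
    rintro _ ⟨⟨i, hi⟩, rfl⟩
    simpa using vsub_mem_vectorSpan ℚ
      (Set.mem_finsetSum_of_zero_mem h₀ hi (by simp [hS] : (fun k => (w i k : ℚ)) ∈ S i))
      (Set.mem_finsetSum_of_zero_mem h₀ hi (h₀ i hi))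
  calc I.card = finrank ℚ (span ℚ (Set.range fun i : (I : Set (Fin (r + 1))) =>
        fun k => (w i k : ℚ))) := by
        rw [finrank_span_eq_card (linearIndepOn_of_ker_linearCombination_eq hc hw hI.ne)]
        simp
    _ ≤ _ := Submodule.finrank_mono hspan

theorem IsEssentialCayley.two_le {r : ℕ} {n : Fin (r + 1) → ℕ}
    {a : (i : Fin (r + 1)) → Fin (n i) → (Fin r → ℤ)} (ha : IsEssentialCayley n a) (hr : 0 < r)
    (i : Fin (r + 1)) : 2 ≤ n i := by
  by_contra! hi
  have hI : {i} ⊂ (Finset.univ : Finset (Fin (r + 1))) := by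
    rw [Finset.ssubset_univ_iff, ← Finset.card_lt_iff_ne_univ]
    simpa using hr
  have : Subsingleton (Fin (n i)) := Fin.subsingleton_iff_le_one.mpr (by omega)
  have h := ha {i} hI
  rw [Finset.sum_singleton, (vectorSpan_eq_bot_iff_subsingleton ℚ).mpr
    ((Set.subsingleton_range _).image _)] at h
  simp at h

theorem IsEssentialCayley.eq_two {r : ℕ} {n : Fin (r + 1) → ℕ}
    {a : (i : Fin (r + 1)) → Fin (n i) → (Fin r → ℤ)} (ha : IsEssentialCayley n a)
    (hn : ∑ i, n i = 2 * (r + 1)) (i : Fin (r + 1)) : n i = 2 := by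
  rcases Nat.eq_zero_or_pos r with rfl | hr
  · simpa [Fin.fin_one_eq_zero i] using hn
  · have hsum : ∑ _j : Fin (r + 1), 2 = ∑ j, n j := by simpa [mul_comm] using hn.symm
    exact ((Finset.sum_eq_sum_iff_of_le fun j _ => ha.two_le hr j).mp hsum i (by simp)).symm

theorem BalancedVec.comp_equiv {ι κ : Type*} {b : ι → ℤ} (hb : BalancedVec b) (e : κ ≃ ι) :
    BalancedVec (b ∘ e) := by
  obtain ⟨σ, hσ⟩ := hb
  exact ⟨e.trans (σ.trans e.symm), fun x => by simp [hσ]⟩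

theorem rev_eq_neg_of_sum_fin_two_eq_zero {b : Fin 2 → ℤ} (hb : ∑ s, b s = 0) (s : Fin 2) :
    b s.rev = -b s := by
  rw [Fin.sum_univ_two] at hb
  fin_cases s <;> simp <;> omega

theorem balancedVec_of_sum_fiber_eq_zero {κ : Type*} {n : κ → ℕ} (hn : ∀ i, n i = 2)
    {b : (Σ i, Fin (n i)) → ℤ} (hb : ∀ i, ∑ s, b ⟨i, s⟩ = 0) : BalancedVec b := by
  refine ⟨Equiv.sigmaCongrRight fun _ => Fin.revPerm, fun ⟨i, s⟩ => ?_⟩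
  have key : ∀ m (f : Fin m → ℤ), m = 2 → ∑ s, f s = 0 → ∀ s, f s.rev = -f s := by
    rintro m f rfl
    exact rev_eq_neg_of_sum_fin_two_eq_zero
  exact key _ (fun s => b ⟨i, s⟩) (hn i) (hb i) s

theorem BalancedVec.exists_equiv_sigma_fin_two {ι : Type*} [Fintype ι] [Nonempty ι]
    {b : ι → ℤ} (hb : BalancedVec b) (hb₀ : ∀ j, b j ≠ 0) :
    ∃ (r : ℕ) (c : Fin (r + 1) → ℤ) (e : (Σ _ : Fin (r + 1), Fin 2) ≃ ι),
      (∀ i, c i ≠ 0) ∧ ∀ x, b (e x) = ![c x.1, -c x.1] x.2 := by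
  classical
  obtain ⟨σ, hσ⟩ := hb
  let P := {j // 0 < b j}
  have hP : ∀ j, 0 < b j ↔ ¬0 < b (σ j) := fun j => by
    have := hb₀ j
    rw [hσ]
    omega
  have : Nonempty P := by
    obtain ⟨j⟩ := ‹Nonempty ι›
    by_cases hj : 0 < b j
    · exact ⟨⟨j, hj⟩⟩
    · exact ⟨⟨σ.symm j, (hP _).mpr (by simpa using hj)⟩⟩
  obtain ⟨r, hr⟩ := Nat.exists_eq_add_one_of_ne_zero (Fintype.card_ne_zero (α := P))
  let g : Fin (r + 1) ≃ P := (Fintype.equivFinOfCardEq hr).symm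
  -- `(i, 0) ↦ g i` and `(i, 1) ↦ σ (g i)`, through `ι ≃ P ⊕ Pᶜ` and `σ : P ≃ Pᶜ`
  let e : (Σ _ : Fin (r + 1), Fin 2) ≃ ι :=
    Equiv.sigmaEquivProd _ _ |>.trans (Equiv.prodComm _ _) |>.trans (finTwoEquiv.prodCongr g)
      |>.trans (Equiv.boolProdEquivSum P) |>.trans ((Equiv.refl P).sumCongr (σ.subtypeEquiv hP))
      |>.trans (Equiv.sumCompl _)
  refine ⟨r, fun i => b (g i), e, fun i => (g i).2.ne', fun ⟨i, s⟩ => ?_⟩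
  fin_cases s
  exacts [rfl, hσ (g i)]

theorem BalancedVec.exists_essentialCayley {ι V : Type*} [Fintype ι] [Nonempty ι]
    [AddCommGroup V] [Module ℚ V] [FiniteDimensional ℚ V] {v : ι → V} {b : ι → ℤ}
    (hb : BalancedVec b) (hb₀ : ∀ j, b j ≠ 0)
    (hv : LinearMap.ker (Fintype.linearCombination ℚ v) = ℚ ∙ fun j => (b j : ℚ))
    (hdim : finrank ℚ V + 1 = Fintype.card ι) :
    ∃ (r : ℕ) (n : Fin (r + 1) → ℕ) (a : (i : Fin (r + 1)) → Fin (n i) → (Fin r → ℤ)),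
      IsEssentialCayley n a ∧
      ∃ (e : ι ≃ (Σ i : Fin (r + 1), Fin (n i))) (L : V ≃ₗ[ℚ] (Fin (r + 1) ⊕ Fin r → ℚ)),
        ∀ j, L (v j) = fun k => (cayleyPoint (e j).1 (a (e j).1 (e j).2) k : ℚ) := by
  obtain ⟨r, c, e, hc, hbe⟩ := hb.exists_equiv_sigma_fin_two hb₀
  have hb' : (fun j => (b j : ℚ)) = (fun x => ![(c x.1 : ℚ), -(c x.1 : ℚ)] x.2) ∘ e.symm := by
    ext j
    obtain ⟨⟨i, s⟩, rfl⟩ := e.surjective j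
    fin_cases s <;> simp [hbe]
  have hu := ker_linearCombination_comp_equiv
    (ker_linearCombination_cayleyPoint_circuitVectors (hc 0)) e.symm
  rw [← hb'] at hu
  have hcard : Fintype.card ι = 2 * (r + 1) := by simpa [mul_comm] using Fintype.card_congr e.symm
  obtain ⟨L, hL⟩ := exists_linearEquiv_apply_eq_of_ker_linearCombination_eq
    (fun h => hb₀ (e ⟨0, 0⟩) (by simpa using congrFun h (e ⟨0, 0⟩))) hv hu hdim
    (by simp [hcard]; omega)
  refine ⟨r, fun _ => 2, fun i => ![circuitVectors c i, 0],
    isEssentialCayley_pairs_of_ker_linearCombination_eq _ (c := fun i => (c i : ℚ))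
      (fun i => Int.cast_ne_zero.mpr (hc i)) ?_,
    e.symm, L, hL⟩
  rw [cast_circuitVectors]
  exact ker_linearCombination_circuitVectors (Int.cast_ne_zero.mpr (hc 0))

theorem BalancedVec.of_essentialCayley {ι V : Type*} [Fintype ι] [AddCommGroup V] [Module ℚ V]
    {v : ι → V} {b : ι → ℤ} (hrel : ∑ j, (b j : ℚ) • v j = 0)
    (hdim : finrank ℚ V + 1 = Fintype.card ι) {r : ℕ} {n : Fin (r + 1) → ℕ}
    {a : (i : Fin (r + 1)) → Fin (n i) → (Fin r → ℤ)} (ha : IsEssentialCayley n a)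
    (e : ι ≃ (Σ i : Fin (r + 1), Fin (n i))) (L : V ≃ₗ[ℚ] (Fin (r + 1) ⊕ Fin r → ℚ))
    (hL : ∀ j, L (v j) = fun k => (cayleyPoint (e j).1 (a (e j).1 (e j).2) k : ℚ)) :
    BalancedVec b := by
  have hn : ∀ i, n i = 2 := ha.eq_two (by
    have hV : finrank ℚ V = r + 1 + r := by simpa using L.finrank_eq
    have hcard : Fintype.card ι = ∑ i, n i := by simpa using Fintype.card_congr e
    omega)
  have hrel' : ∑ x, (b (e.symm x) : ℚ) • Sum.elim (Pi.single x.1 1)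
      (fun k => (a x.1 x.2 k : ℚ)) = 0 := by
    rw [← e.sum_comp]
    simp only [Equiv.symm_apply_apply, ← cast_cayleyPoint]
    simp_rw [← hL, ← map_smul, ← map_sum, hrel, map_zero]
  have hfib : ∀ i, ∑ s, b (e.symm ⟨i, s⟩) = 0 := fun i => by
    have := congrFun hrel' (Sum.inl i)
    rw [cayley_linearCombination_inl, Pi.zero_apply] at this
    exact_mod_cast this
  simpa [Function.comp_assoc] using
    (balancedVec_of_sum_fiber_eq_zero (b := b ∘ e.symm) hn hfib).comp_equiv e

theorem circuit_balanced_iff_essential_cayley_general {d : ℕ}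
    (A : Matrix (Fin d) (Fin (d + 1)) ℤ)
    (b : Fin (d + 1) → ℤ) (hbnz : ∀ j, b j ≠ 0) (hbker : A.mulVec b = 0)
    (hker : ∀ v : Fin (d + 1) → ℚ,
      (A.map (fun x : ℤ => (x : ℚ))).mulVec v = 0 → ∃ t : ℚ, v = t • fun j => (b j : ℚ)) :
    BalancedVec b ↔
      ∃ (r : ℕ) (n : Fin (r + 1) → ℕ) (a : (i : Fin (r + 1)) → Fin (n i) → (Fin r → ℤ)),
        IsEssentialCayley n a ∧
        ∃ (e : Fin (d + 1) ≃ (Σ i : Fin (r + 1), Fin (n i)))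
          (L : (Fin d → ℚ) ≃ₗ[ℚ] (Fin (r + 1) ⊕ Fin r → ℚ)),
          ∀ j : Fin (d + 1),
            L (fun i => (A i j : ℚ)) =
              fun k => (cayleyPoint (e j).1 (a (e j).1 (e j).2) k : ℚ) := by
  have hAb : (A.map (fun x : ℤ => (x : ℚ))).mulVec (fun j => (b j : ℚ)) = 0 := by
    ext i
    simpa [Matrix.mulVec, dotProduct] using congrArg (Int.cast : ℤ → ℚ) (congrFun hbker i)
  have hker' := Matrix.ker_linearCombination_col hAb hker
  constructor
  · intro hb
    exact hb.exists_essentialCayley hbnz hker' (by simp)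
  · rintro ⟨r, n, a, ha, e, L, hL⟩
    have hrel := LinearMap.mem_ker.mp (hker'.symm ▸ mem_span_singleton_self _)
    rw [Fintype.linearCombination_apply] at hrel
    exact BalancedVec.of_essentialCayley hrel (by simp) ha e L hL

/-- A circuit configuration (a `d × (d+1)` integer matrix of rank `d`, with `(1,…,1)` in
its row span, whose kernel is spanned by a vector `b` with all coordinates nonzero) is
balanced if and only if it is affinely isomorphic (via an element of `GL(d,ℚ)` and a
relabeling of points) to an essential Cayley configuration. -/
theorem circuit_balanced_iff_essential_cayley {d : ℕ}
    (A : Matrix (Fin d) (Fin (d + 1)) ℤ)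
    (hrank : (A.map (fun x : ℤ => (x : ℚ))).rank = d)
    (hrow : ∃ w : Fin d → ℚ, ∀ j, ∑ i, w i * (A i j : ℚ) = 1)
    (b : Fin (d + 1) → ℤ) (hbnz : ∀ j, b j ≠ 0) (hbker : A.mulVec b = 0)
    (hker : ∀ v : Fin (d + 1) → ℚ,
      (A.map (fun x : ℤ => (x : ℚ))).mulVec v = 0 → ∃ t : ℚ, v = t • fun j => (b j : ℚ)) :
    BalancedVec b ↔
      ∃ (r : ℕ) (n : Fin (r + 1) → ℕ) (a : (i : Fin (r + 1)) → Fin (n i) → (Fin r → ℤ)),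
        IsEssentialCayley n a ∧
        ∃ (e : Fin (d + 1) ≃ (Σ i : Fin (r + 1), Fin (n i)))
          (L : (Fin d → ℚ) ≃ₗ[ℚ] (Fin (r + 1) ⊕ Fin r → ℚ)),
          ∀ j : Fin (d + 1),
            L (fun i => (A i j : ℚ)) =
              fun k => (cayleyPoint (e j).1 (a (e j).1 (e j).2) k : ℚ) :=
  circuit_balanced_iff_essential_cayley_general A b hbnz hbker hker
end

section
/- For relatively prime positive integers p, q, and any integer k ≥ 1, define F(m,n) = (p(m+n+k)-1)! (q(m+n+k)-1)! / ((np)!(nq)!(mp)!(mq)!) for m, n ∈ ℕ. Then the two-variable power series Ψ(u,v) = Σ_{m,n ≥ 0} F(m,n) u^m v^n is not a rational function of (u,v). -/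
/-!
If `Q Ψ = P` with `Q(0) ≠ 0`, comparing coefficients of `uᵃ vᵇ` for large `a, b` gives the
recurrence `∑ₛ Qₛ F(a - s₀, b - s₁) = 0`. Dividing every term by one common product of factorials
turns `F(a - i, b - j)` into a polynomial `Tᵢⱼ(a, b)`: for each `r ∈ {p, q}`, a rising factorial
of length `r(2d - i - j)` at `r(a + b + k - 2d)` times the falling factorials of lengths `ri`, `rj`
at `ra`, `rb`. Hence `∑ₛ Qₛ Tₛ` vanishes on a grid of large integers, so it is the zero polynomial.

At the origin every `Tᵢⱼ` vanishes, `T₀₀` included, so one looks at second order: `Tᵢⱼ` is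
divisible by `a²` if `i > 0` and by `b²` if `j > 0`, whereas `T₀₀ = (a + b)² W` with `W(0,0) ≠ 0`
(this is where `1 ≤ k ≤ 2d` enters). The coefficient of `ab` in `∑ₛ Qₛ Tₛ` is therefore
`2 Q₀ W(0,0)`, which forces `Q₀ = 0`.
-/

open MvPolynomial Nat

section

variable {σ R : Type*} [CommSemiring R]

theorem MvPolynomial.coeff_coe_mul (Q : MvPolynomial σ R) (Ψ : MvPowerSeries σ R)
    (e : σ →₀ ℕ) :
    MvPowerSeries.coeff e ((Q : MvPowerSeries σ R) * Ψ) =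
      ∑ s ∈ Q.support, if s ≤ e then coeff s Q * MvPowerSeries.coeff (e - s) Ψ else 0 := by
  conv_lhs => rw [Q.as_sum, ← coeToMvPowerSeries.ringHom_apply, map_sum]
  simp [Finset.sum_mul, coe_monomial, MvPowerSeries.coeff_monomial_mul]

theorem MvPolynomial.sum_coeff_mul_coeff_eq_zero_of_coe_mul_eq {P Q : MvPolynomial σ R}
    {Ψ : MvPowerSeries σ R} (h : (Q : MvPowerSeries σ R) * Ψ = P) {e : σ →₀ ℕ}
    (hQ : ∀ s ∈ Q.support, s ≤ e) (hP : P.totalDegree < e.degree) :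
    ∑ s ∈ Q.support, coeff s Q * MvPowerSeries.coeff (e - s) Ψ = 0 := by
  rw [← coeff_eq_zero_of_totalDegree_lt (f := P) (by rwa [← Finsupp.degree_apply]),
    ← coeff_coe, ← h, coeff_coe_mul]
  exact Finset.sum_congr rfl fun s hs => (if_pos (hQ s hs)).symm

theorem MvPolynomial.coeff_X_pow_mul_of_lt {m : σ →₀ ℕ} {u : σ} {n : ℕ} (h : m u < n)
    (V : MvPolynomial σ R) : coeff m (X u ^ n * V) = 0 := by
  rw [X_pow_eq_monomial, coeff_monomial_mul', if_neg]
  intro hle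
  have := hle u
  simp only [Finsupp.single_eq_same] at this
  omega

theorem MvPolynomial.coeff_single_add_single_X_add_X_sq_mul {u v : σ} (huv : u ≠ v)
    (V : MvPolynomial σ R) :
    coeff (Finsupp.single u 1 + Finsupp.single v 1) ((X u + X v) ^ 2 * V) =
      2 * constantCoeff V := by
  have hmixed : X u * X v = monomial (Finsupp.single u 1 + Finsupp.single v 1) (1 : R) := by
    simp [X, monomial_mul]
  rw [show (X u + X v) ^ 2 * V = X u ^ 2 * V + X v ^ 2 * V + (X u * X v * V + X u * X v * V) by
      ring, coeff_add, coeff_add, coeff_add, coeff_X_pow_mul_of_lt (by simp [huv.symm]),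
    coeff_X_pow_mul_of_lt (by simp [huv]), hmixed,
    coeff_monomial_mul', if_pos le_rfl, tsub_self, one_mul, constantCoeff_eq, two_mul, zero_add,
    zero_add]

end

theorem Nat.cast_factorial_add_eq_mul_ascPochhammer {S : Type*} [Semiring S] (A L : ℕ) :
    ((A + L)! : S) = A ! * (ascPochhammer S L).eval ((A : S) + 1) := by
  rw [← Nat.factorial_mul_ascFactorial, ← ascPochhammer_nat_eq_ascFactorial, Nat.cast_mul,
    ascPochhammer_eval_cast, Nat.cast_succ]

theorem Nat.cast_factorial_eq_mul_descPochhammer {S : Type*} [CommRing S] {n L : ℕ}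
    (h : L ≤ n) :
    (n ! : S) = (n - L)! * (descPochhammer S L).eval (n : S) := by
  rw [descPochhammer_eval_eq_descFactorial, ← Nat.cast_mul, Nat.factorial_mul_descFactorial h]

theorem RingHom.map_ascPochhammer_eval {S T : Type*} [Semiring S] [Semiring T] (f : S →+* T)
    (n : ℕ) (x : S) : f ((ascPochhammer S n).eval x) = (ascPochhammer T n).eval (f x) := by
  rw [← Polynomial.eval₂_hom, ← Polynomial.eval_map, ascPochhammer_map]

theorem RingHom.map_descPochhammer_eval {S T : Type*} [Ring S] [Ring T] (f : S →+* T)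
    (n : ℕ) (x : S) : f ((descPochhammer S n).eval x) = (descPochhammer T n).eval (f x) := by
  rw [← Polynomial.eval₂_hom, ← Polynomial.eval_map, descPochhammer_map]

theorem MvPolynomial.eq_zero_of_eval_natCast_eq_zero {σ R : Type*} [CommRing R] [IsDomain R]
    [CharZero R] {G : MvPolynomial σ R} (N : ℕ)
    (h : ∀ x : σ → ℕ, (∀ t, N ≤ x t) → eval (fun t => (x t : R)) G = 0) : G = 0 := by
  refine funext_set (fun _ => Nat.cast '' Set.Ici N)
    (fun _ => (Set.Ici_infinite N).image Nat.cast_injective.injOn) fun x hx => ?_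
  choose y hyN hyx using fun t => hx t trivial
  rw [map_zero, ← _root_.funext hyx]
  exact h y hyN

/-- The `r`-part of the coefficients: `F m n = factorialRatio p k m n * factorialRatio q k m n`. -/
noncomputable def factorialRatio (r k m n : ℕ) : ℂ :=
  ((r * (m + n + k) - 1)! : ℂ) / ((n * r)! * (m * r)!)

noncomputable def shiftQuotient (r k d i j : ℕ) : MvPolynomial (Fin 2) ℂ :=
  (ascPochhammer _ (r * (2 * d - i - j))).eval (C (r : ℂ) * (X 0 + X 1 + C ((k : ℂ) - 2 * d))) *
    (descPochhammer _ (r * i)).eval (C (r : ℂ) * X 0) *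
    (descPochhammer _ (r * j)).eval (C (r : ℂ) * X 1)

theorem eval_shiftQuotient (r k d i j : ℕ) (x : Fin 2 → ℂ) :
    eval x (shiftQuotient r k d i j) =
      (ascPochhammer ℂ (r * (2 * d - i - j))).eval (r * (x 0 + x 1 + (k - 2 * d))) *
        (descPochhammer ℂ (r * i)).eval (r * x 0) *
        (descPochhammer ℂ (r * j)).eval (r * x 1) := by
  simp [shiftQuotient, (eval x).map_ascPochhammer_eval, (eval x).map_descPochhammer_eval]

theorem factorialRatio_eq_mul_eval_shiftQuotient {r k d i j : ℕ} (hk : 0 < k) (hi : i ≤ d)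
    (hj : j ≤ d) (x : Fin 2 → ℕ) (h0 : d ≤ x 0) (h1 : d ≤ x 1) :
    factorialRatio r k (x 0 - i) (x 1 - j) =
      ((r * (x 0 + x 1 + k - 2 * d) - 1)! : ℂ) / ((x 0 * r)! * (x 1 * r)!) *
        eval (fun t => (x t : ℂ)) (shiftQuotient r k d i j) := by
  rcases Nat.eq_zero_or_pos r with rfl | hr
  · simp [factorialRatio, shiftQuotient]
  have hnum : ((r * (x 0 - i + (x 1 - j) + k) - 1)! : ℂ) = (r * (x 0 + x 1 + k - 2 * d) - 1)! *
      (ascPochhammer ℂ (r * (2 * d - i - j))).eval (r * (x 0 + x 1 + (k - 2 * d)) : ℂ) := by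
    have hpos : 1 ≤ r * (x 0 + x 1 + k - 2 * d) := Nat.mul_pos hr (by omega)
    have hsplit : r * (x 0 - i + (x 1 - j) + k) - 1 =
        (r * (x 0 + x 1 + k - 2 * d) - 1) + r * (2 * d - i - j) := by
      rw [show x 0 - i + (x 1 - j) + k = (x 0 + x 1 + k - 2 * d) + (2 * d - i - j) by omega,
        mul_add]
      omega
    rw [hsplit, Nat.cast_factorial_add_eq_mul_ascPochhammer, Nat.cast_sub hpos, Nat.cast_mul,
      Nat.cast_sub (by omega)]
    push_cast
    ring_nf
  have hden (y l : ℕ) (hl : l ≤ y) : ((y * r)! : ℂ) =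
      ((y - l) * r)! * (descPochhammer ℂ (r * l)).eval (r * y : ℂ) := by
    rw [Nat.cast_factorial_eq_mul_descPochhammer (L := r * l) (by nlinarith), Nat.sub_mul]
    push_cast
    ring_nf
  have ha := hden (x 0) i (by omega)
  have hb := hden (x 1) j (by omega)
  have ha' := right_ne_zero_of_mul (ha ▸ Nat.cast_ne_zero.2 (factorial_ne_zero _))
  have hb' := right_ne_zero_of_mul (hb ▸ Nat.cast_ne_zero.2 (factorial_ne_zero _))
  rw [eval_shiftQuotient, factorialRatio, hnum, ha, hb]
  field_simp

theorem X_zero_dvd_shiftQuotient {r i : ℕ} (hr : 0 < r) (hi : 0 < i) (k d j : ℕ) :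
    X 0 ∣ shiftQuotient r k d i j := by
  obtain ⟨n, hn⟩ := Nat.exists_eq_add_one.2 (Nat.mul_pos hr hi)
  rw [shiftQuotient, hn, descPochhammer_succ_left, Polynomial.eval_mul, Polynomial.eval_X]
  exact (((dvd_mul_left _ _).mul_right _).mul_left _).mul_right _

theorem X_one_dvd_shiftQuotient {r j : ℕ} (hr : 0 < r) (hj : 0 < j) (k d i : ℕ) :
    X 1 ∣ shiftQuotient r k d i j := by
  obtain ⟨n, hn⟩ := Nat.exists_eq_add_one.2 (Nat.mul_pos hr hj)
  rw [shiftQuotient, hn, descPochhammer_succ_left, Polynomial.eval_mul, Polynomial.eval_X]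
  exact ((dvd_mul_left _ _).mul_right _).mul_left _

theorem shiftQuotient_zero_zero {r k : ℕ} (hr : 0 < r) (hk : 0 < k) {d : ℕ}
    (hkd : k ≤ 2 * d) :
    ∃ W, shiftQuotient r k d 0 0 = (X 0 + X 1) * W ∧ constantCoeff W ≠ 0 := by
  obtain ⟨n, hn⟩ := Nat.exists_eq_add_one.2 (Nat.mul_pos hr hk)
  set z : MvPolynomial (Fin 2) ℂ := C (r : ℂ) * (X 0 + X 1 + C ((k : ℂ) - 2 * d))
  have hlen : r * (2 * d - 0 - 0) = r * (2 * d - k) + (n + 1) := by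
    rw [← hn, ← mul_add]; congr 1; omega
  have hN : ((r * (2 * d - k) : ℕ) : ℂ) = -(r * (k - 2 * d)) := by
    push_cast [Nat.cast_sub hkd]; ring
  have hshift :
      z + ((r * (2 * d - k) : ℕ) : MvPolynomial (Fin 2) ℂ) = C (r : ℂ) * (X 0 + X 1) := by
    rw [← map_natCast (C : ℂ →+* MvPolynomial (Fin 2) ℂ), hN, map_neg, map_mul]
    ring
  refine ⟨C (r : ℂ) * ((ascPochhammer _ (r * (2 * d - k))).eval z *
    (ascPochhammer _ n).eval (C (r : ℂ) * (X 0 + X 1) + 1)), ?_, ?_⟩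
  · rw [shiftQuotient, hlen, ← ascPochhammer_mul, ascPochhammer_succ_left, Polynomial.eval_mul,
      Polynomial.eval_comp, Polynomial.eval_add, Polynomial.eval_X, Polynomial.eval_natCast, hshift,
      Polynomial.eval_mul, Polynomial.eval_comp, Polynomial.eval_add, Polynomial.eval_X,
      Polynomial.eval_one]
    simp only [mul_zero, descPochhammer_zero, Polynomial.eval_one, mul_one, z]
    ring
  · simp only [map_mul, constantCoeff_C, constantCoeff.map_ascPochhammer_eval]
    simp only [z, map_add, map_mul, constantCoeff_C, constantCoeff_X, map_one, add_zero, zero_add,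
      mul_zero]
    refine mul_ne_zero (Nat.cast_ne_zero.2 hr.ne') (mul_ne_zero ?_ ?_) <;>
      rw [Ne, ascPochhammer_eval_eq_zero_iff] <;> rintro ⟨t, ht, hteq⟩
    · rw [← hN, Nat.cast_inj] at hteq
      omega
    · exact Nat.cast_add_one_ne_zero t (by rw [hteq]; ring)

theorem coeff_X_zero_mul_X_one_shiftQuotient_mul_eq_zero {p q : ℕ} (hp : 0 < p) (hq : 0 < q)
    (k d : ℕ) {s : Fin 2 →₀ ℕ} (hs : s ≠ 0) :
    coeff (Finsupp.single 0 1 + Finsupp.single 1 1)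
      (shiftQuotient p k d (s 0) (s 1) * shiftQuotient q k d (s 0) (s 1)) = 0 := by
  rcases Nat.eq_zero_or_pos (s 0) with h0 | h0
  · have h1 : 0 < s 1 := by
      refine Nat.pos_of_ne_zero fun h1 => hs (Finsupp.ext fun t => ?_)
      fin_cases t <;> simpa
    obtain ⟨V, hV⟩ := mul_dvd_mul (X_one_dvd_shiftQuotient hp h1 k d (s 0))
      (X_one_dvd_shiftQuotient hq h1 k d (s 0))
    rw [hV, ← sq, coeff_X_pow_mul_of_lt (by simp)]
  · obtain ⟨V, hV⟩ := mul_dvd_mul (X_zero_dvd_shiftQuotient hp h0 k d (s 1))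
      (X_zero_dvd_shiftQuotient hq h0 k d (s 1))
    rw [hV, ← sq, coeff_X_pow_mul_of_lt (by simp)]

theorem coeff_X_zero_mul_X_one_shiftQuotient_zero_zero_ne_zero {p q k : ℕ} (hp : 0 < p)
    (hq : 0 < q) (hk : 0 < k) {d : ℕ} (hkd : k ≤ 2 * d) :
    coeff (Finsupp.single 0 1 + Finsupp.single 1 1)
      (shiftQuotient p k d 0 0 * shiftQuotient q k d 0 0) ≠ 0 := by
  obtain ⟨V, hV, hV0⟩ := shiftQuotient_zero_zero hp hk hkd
  obtain ⟨W, hW, hW0⟩ := shiftQuotient_zero_zero hq hk hkd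
  rw [hV, hW, show (X 0 + X 1) * V * ((X 0 + X 1) * W) = (X 0 + X 1) ^ 2 * (V * W) by ring,
    coeff_single_add_single_X_add_X_sq_mul (by decide), map_mul]
  exact mul_ne_zero two_ne_zero (mul_ne_zero hV0 hW0)

theorem sum_coeff_mul_shiftQuotient_eq_zero {p q k : ℕ} (hk : 0 < k)
    {P Q : MvPolynomial (Fin 2) ℂ} {Ψ : MvPowerSeries (Fin 2) ℂ}
    (hQP : (Q : MvPowerSeries (Fin 2) ℂ) * Ψ = P)
    (hΨ : ∀ e, MvPowerSeries.coeff e Ψ =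
      factorialRatio p k (e 0) (e 1) * factorialRatio q k (e 0) (e 1))
    {d : ℕ} (hd : Q.totalDegree ≤ d) :
    ∑ s ∈ Q.support, C (coeff s Q) *
      (shiftQuotient p k d (s 0) (s 1) * shiftQuotient q k d (s 0) (s 1)) = 0 := by
  refine eq_zero_of_eval_natCast_eq_zero (P.totalDegree + d + 1) fun x hx => ?_
  have hsupp : ∀ s ∈ Q.support, s 0 ≤ d ∧ s 1 ≤ d := fun s hs => by
    have := le_totalDegree hs
    rw [Finsupp.sum_fintype _ _ (by simp), Fin.sum_univ_two] at this
    omega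
  set e := Finsupp.equivFunOnFinite.symm x
  have hrec := sum_coeff_mul_coeff_eq_zero_of_coe_mul_eq hQP (e := e)
    (fun s hs t => by fin_cases t <;> simp [e] <;> linarith [hsupp s hs, hx 0, hx 1])
    (by simp [e, Finsupp.degree_eq_sum]; linarith [hx 0, hx 1])
  set K : ℂ := ((p * (x 0 + x 1 + k - 2 * d) - 1)! : ℂ) / ((x 0 * p)! * (x 1 * p)!) *
    (((q * (x 0 + x 1 + k - 2 * d) - 1)! : ℂ) / ((x 0 * q)! * (x 1 * q)!))
  have hK : K ≠ 0 := by simp [K, factorial_ne_zero]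
  have hterm : ∀ s ∈ Q.support, coeff s Q * MvPowerSeries.coeff (e - s) Ψ =
      K * eval (fun t => (x t : ℂ)) (C (coeff s Q) *
        (shiftQuotient p k d (s 0) (s 1) * shiftQuotient q k d (s 0) (s 1))) := fun s hs => by
    have h0 : d ≤ x 0 := by linarith [hx 0]
    have h1 : d ≤ x 1 := by linarith [hx 1]
    rw [hΨ, Finsupp.tsub_apply, Finsupp.tsub_apply, Finsupp.coe_equivFunOnFinite_symm,
      factorialRatio_eq_mul_eval_shiftQuotient hk (hsupp s hs).1 (hsupp s hs).2 x h0 h1,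
      factorialRatio_eq_mul_eval_shiftQuotient hk (hsupp s hs).1 (hsupp s hs).2 x h0 h1,
      map_mul, map_mul, eval_C]
    ring
  rw [Finset.sum_congr rfl hterm, ← Finset.mul_sum] at hrec
  rw [map_sum]
  exact (mul_eq_zero.1 hrec).resolve_left hK

theorem octahedron_series_not_rational_general (p q k : ℕ) (hp : 0 < p) (hq : 0 < q)
    (hk : 1 ≤ k)
    (F : ℕ → ℕ → ℂ)
    (hF : F = fun m n =>
      ((Nat.factorial (p * (m + n + k) - 1) : ℂ) * (Nat.factorial (q * (m + n + k) - 1) : ℂ)) /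
      ((Nat.factorial (n * p) : ℂ) * (Nat.factorial (n * q) : ℂ) *
        (Nat.factorial (m * p) : ℂ) * (Nat.factorial (m * q) : ℂ)))
    (Ψ : MvPowerSeries (Fin 2) ℂ)
    (hΨ : ∀ e : Fin 2 →₀ ℕ, MvPowerSeries.coeff e Ψ = F (e 0) (e 1)) :
    ¬ ∃ P Q : MvPolynomial (Fin 2) ℂ, MvPolynomial.coeff 0 Q ≠ 0 ∧
      (Q : MvPowerSeries (Fin 2) ℂ) * Ψ = (P : MvPowerSeries (Fin 2) ℂ) := by
  rintro ⟨P, Q, hQ0, hQP⟩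
  have hΨ' : ∀ e, MvPowerSeries.coeff e Ψ =
      factorialRatio p k (e 0) (e 1) * factorialRatio q k (e 0) (e 1) := fun e => by
    simp only [hΨ, hF, factorialRatio]
    ring
  have hG := congrArg (coeff (Finsupp.single 0 1 + Finsupp.single 1 1))
    (sum_coeff_mul_shiftQuotient_eq_zero hk hQP hΨ' (d := Q.totalDegree + k) le_self_add)
  rw [coeff_sum, Finset.sum_eq_single 0
    (fun s _ hs => by
      rw [coeff_C_mul, coeff_X_zero_mul_X_one_shiftQuotient_mul_eq_zero hp hq _ _ hs, mul_zero])
    (fun h0 => absurd (notMem_support_iff.1 h0) hQ0), coeff_C_mul, coeff_zero] at hG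
  exact mul_ne_zero hQ0 (coeff_X_zero_mul_X_one_shiftQuotient_zero_zero_ne_zero hp hq hk
    (by omega)) hG

/-- For coprime positive integers `p, q` and an integer `k ≥ 1`, the two-variable power
series `Ψ(u,v) = Σ_{m,n≥0} F(m,n) uᵐ vⁿ`, where
`F(m,n) = (p(m+n+k)-1)! (q(m+n+k)-1)! / ((np)!(nq)!(mp)!(mq)!)`,
is not a rational function of `(u,v)`. -/
theorem octahedron_series_not_rational (p q k : ℕ) (hp : 0 < p) (hq : 0 < q)
    (hpq : Nat.Coprime p q) (hk : 1 ≤ k)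
    (F : ℕ → ℕ → ℂ)
    (hF : F = fun m n =>
      ((Nat.factorial (p * (m + n + k) - 1) : ℂ) * (Nat.factorial (q * (m + n + k) - 1) : ℂ)) /
      ((Nat.factorial (n * p) : ℂ) * (Nat.factorial (n * q) : ℂ) *
        (Nat.factorial (m * p) : ℂ) * (Nat.factorial (m * q) : ℂ)))
    (Ψ : MvPowerSeries (Fin 2) ℂ)
    (hΨ : ∀ e : Fin 2 →₀ ℕ, MvPowerSeries.coeff e Ψ = F (e 0) (e 1)) :
    ¬ ∃ P Q : MvPolynomial (Fin 2) ℂ, MvPolynomial.coeff 0 Q ≠ 0 ∧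
      (Q : MvPowerSeries (Fin 2) ℂ) * Ψ = (P : MvPowerSeries (Fin 2) ℂ) :=
  octahedron_series_not_rational_general p q k hp hq hk F hF Ψ hΨ
end

section
/- For the (r+1)×(r+1) matrix X = (x_{ij}) of indeterminates, the function f = 1/det(X) is annihilated by the toric operators ∂_{ij}∂_{kl} - ∂_{il}∂_{kj} for all i,k ∈ {0,...,r}, j,l ∈ {0,...,r}, and satisfies the Euler equations (Σ_j x_{ij} ∂_{ij} + 1) f = 0 for each row i and (Σ_i x_{ij} ∂_{ij} + 1) f = 0 for each column j. -/
/-- Partial derivative with respect to the matrix entry `(i,j)` of a function of an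
`(r+1)×(r+1)` array of complex variables. -/
noncomputable def pdM {r : ℕ} (i j : Fin (r + 1))
    (g : (Fin (r + 1) → Fin (r + 1) → ℂ) → ℂ) : (Fin (r + 1) → Fin (r + 1) → ℂ) → ℂ :=
  fun X => fderiv ℂ g X (Pi.single i (Pi.single j 1))

/-!
Along the coordinate line `X + t E_ij` the determinant is affine with slope the cofactor
`adj(X)_ji`, so `∂_ij (1/det) = -(X⁻¹)_ji / det`. Differentiating once more, with
`∂_ij X⁻¹ = -X⁻¹ E_ij X⁻¹`, gives `∂_ij ∂_kl (1/det) = (X⁻¹_li X⁻¹_jk + X⁻¹_lk X⁻¹_ji) / det`,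
which is symmetric under `j ↔ l`. The Euler equations are the diagonal entries of
`X X⁻¹ = X⁻¹ X = 1`.
-/

open Matrix Filter Topology

section LineDeriv

variable {𝕜 E : Type*} [NontriviallyNormedField 𝕜] [NormedAddCommGroup E] [NormedSpace 𝕜 E]
  {f g : E → 𝕜} {f' g' : 𝕜} {x v : E}

theorem HasLineDerivAt.neg (hf : HasLineDerivAt 𝕜 f f' x v) :
    HasLineDerivAt 𝕜 (fun y => -f y) (-f') x v :=
  HasDerivAt.fun_neg hf

theorem HasLineDerivAt.mul (hf : HasLineDerivAt 𝕜 f f' x v) (hg : HasLineDerivAt 𝕜 g g' x v) :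
    HasLineDerivAt 𝕜 (fun y => f y * g y) (f' * g x + f x * g') x v := by
  simpa [HasLineDerivAt] using HasDerivAt.fun_mul hf hg

theorem HasLineDerivAt.inv (hf : HasLineDerivAt 𝕜 f f' x v) (hx : f x ≠ 0) :
    HasLineDerivAt 𝕜 (fun y => (f y)⁻¹) (-f' / f x ^ 2) x v := by
  simpa [HasLineDerivAt] using HasDerivAt.fun_inv hf (by simpa using hx)

end LineDeriv

section Det

variable {n : Type*} [Fintype n] [DecidableEq n]

theorem det_of_add_smul_single {R : Type*} [CommRing R] (X : n → n → R) (i j : n) (t : R) :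
    (of (X + t • (Pi.single i (Pi.single j 1) : n → n → R))).det
      = (of X).det + t * adjugate (of X) j i := by
  have hrow : of (X + t • (Pi.single i (Pi.single j 1) : n → n → R))
      = (of X).updateRow i (of X i + t • Pi.single j 1) := by
    ext a b
    rcases eq_or_ne a i with rfl | h
    · simp
    · simp [h]
  rw [hrow, det_updateRow_add, det_updateRow_smul, updateRow_eq_self, adjugate_apply]

theorem inv_apply_eq_inv_det_mul_adjugate {K : Type*} [Field K] (A : Matrix n n K) (i j : n) :
    A⁻¹ i j = A.det⁻¹ * adjugate A i j := by
  rw [inv_def, Ring.inverse_eq_inv', Matrix.smul_apply, smul_eq_mul]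

theorem mul_of_single_single_mul_apply {R : Type*} [CommRing R] (A B : Matrix n n R) (i j l k : n) :
    (A * of (Pi.single i (Pi.single j 1)) * B : Matrix n n R) l k = A l i * B j k := by
  rw [← single_eq_of_single_single]
  simp [Matrix.mul_apply, single_apply, ite_and]

variable {𝕜 : Type*} [NontriviallyNormedField 𝕜]

theorem differentiable_det_of : Differentiable 𝕜 fun X : n → n → 𝕜 => (of X).det := by
  simp only [det_apply', of_apply]
  fun_prop

theorem hasLineDerivAt_det_of (X : n → n → 𝕜) (i j : n) :
    HasLineDerivAt 𝕜 (fun Y : n → n → 𝕜 => (of Y).det) (adjugate (of X) j i) X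
      (Pi.single i (Pi.single j 1)) := by
  simp only [HasLineDerivAt, det_of_add_smul_single]
  simpa using ((hasDerivAt_id (0 : 𝕜)).mul_const (adjugate (of X) j i)).const_add (of X).det

end Det

section Inverse

-- Any normed-algebra structure on matrices would do: it only serves to differentiate
-- `Ring.inverse`, and every statement below is about scalar-valued functions.
attribute [local instance] Matrix.linftyOpNormedRing Matrix.linftyOpNormedAlgebra

variable {𝕜 : Type*} [RCLike 𝕜] {n : Type*} [Fintype n] [DecidableEq n]

noncomputable def Matrix.ofCLM : (n → n → 𝕜) →L[𝕜] Matrix n n 𝕜 :=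
  (ofLinearEquiv 𝕜).toLinearMap.toContinuousLinearMap

noncomputable def Matrix.entryCLM (l k : n) : Matrix n n 𝕜 →L[𝕜] 𝕜 :=
  (entryLinearMap 𝕜 𝕜 l k).toContinuousLinearMap

theorem hasFDerivAt_inv_of_apply {X : n → n → 𝕜} (hX : IsUnit (of X).det) (l k : n) :
    HasFDerivAt (fun Y : n → n → 𝕜 => (of Y)⁻¹ l k)
      (entryCLM l k ∘L (-ContinuousLinearMap.mulLeftRight 𝕜 (Matrix n n 𝕜) (of X)⁻¹ (of X)⁻¹) ∘L
        ofCLM) X := by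
  obtain ⟨u, hu⟩ := (isUnit_iff_isUnit_det _).2 hX
  have hinv := hasFDerivAt_ringInverse (𝕜 := 𝕜) u
  rw [coe_units_inv, hu] at hinv
  have hof := (ofCLM (𝕜 := 𝕜) (n := n)).hasFDerivAt (x := X)
  have hentry := (entryCLM (𝕜 := 𝕜) l k).hasFDerivAt (x := Ring.inverse (of X))
  have hcomp := hentry.comp X (hinv.comp X hof)
  simp only [nonsing_inv_eq_ringInverse] at hcomp ⊢
  exact hcomp

theorem hasLineDerivAt_inv_of_apply {X : n → n → 𝕜} (hX : IsUnit (of X).det) (i j l k : n) :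
    HasLineDerivAt 𝕜 (fun Y : n → n → 𝕜 => (of Y)⁻¹ l k) (-((of X)⁻¹ l i * (of X)⁻¹ j k)) X
      (Pi.single i (Pi.single j 1)) := by
  have hval : (entryCLM l k ∘L
      (-ContinuousLinearMap.mulLeftRight 𝕜 (Matrix n n 𝕜) (of X)⁻¹ (of X)⁻¹) ∘L ofCLM)
      (Pi.single i (Pi.single j 1)) = -((of X)⁻¹ l i * (of X)⁻¹ j k) := by
    change -(((of X)⁻¹ * of (Pi.single i (Pi.single j 1)) * (of X)⁻¹ : Matrix n n 𝕜) l k) = _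
    rw [mul_of_single_single_mul_apply]
  exact hval ▸ (hasFDerivAt_inv_of_apply hX l k).hasLineDerivAt _

end Inverse

section PartialDeriv

variable {r : ℕ} {i j : Fin (r + 1)} {X : Fin (r + 1) → Fin (r + 1) → ℂ}

theorem pdM_eq_of_hasLineDerivAt {g : (Fin (r + 1) → Fin (r + 1) → ℂ) → ℂ} {c : ℂ}
    (hg : DifferentiableAt ℂ g X) (h : HasLineDerivAt ℂ g c X (Pi.single i (Pi.single j 1))) :
    pdM i j g X = c := by
  rw [pdM, ← hg.lineDeriv_eq_fderiv, h.lineDeriv]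

theorem pdM_congr_of_eventuallyEq {g₁ g₂ : (Fin (r + 1) → Fin (r + 1) → ℂ) → ℂ}
    (h : g₁ =ᶠ[𝓝 X] g₂) : pdM i j g₁ X = pdM i j g₂ X := by
  simp only [pdM, h.fderiv_eq]

theorem pdM_inv_det (hX : (of X).det ≠ 0) (i j : Fin (r + 1)) :
    pdM i j (fun Y => (of Y).det⁻¹) X = -(of X)⁻¹ j i * (of X).det⁻¹ := by
  rw [pdM_eq_of_hasLineDerivAt (differentiable_det_of X |>.fun_inv hX)
    ((hasLineDerivAt_det_of X i j).inv hX), inv_apply_eq_inv_det_mul_adjugate]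
  field_simp

theorem pdM_pdM_inv_det (hX : (of X).det ≠ 0) (i j k l : Fin (r + 1)) :
    pdM i j (pdM k l fun Y => (of Y).det⁻¹) X
      = ((of X)⁻¹ l i * (of X)⁻¹ j k + (of X)⁻¹ l k * (of X)⁻¹ j i) * (of X).det⁻¹ := by
  have hunit : IsUnit (of X).det := hX.isUnit
  have hnear : pdM k l (fun Y => (of Y).det⁻¹) =ᶠ[𝓝 X]
      fun Y => -(of Y)⁻¹ l k * (of Y).det⁻¹ := by
    filter_upwards [differentiable_det_of.continuous.isOpen_preimage _ isOpen_ne |>.mem_nhds hX]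
      with Y hY using pdM_inv_det hY k l
  rw [pdM_congr_of_eventuallyEq hnear, pdM_eq_of_hasLineDerivAt
    (((hasFDerivAt_inv_of_apply hunit l k).differentiableAt.fun_neg).fun_mul
      ((differentiable_det_of X).fun_inv hX))
    (((hasLineDerivAt_inv_of_apply hunit i j l k).neg).mul ((hasLineDerivAt_det_of X i j).inv hX)),
    inv_apply_eq_inv_det_mul_adjugate _ j i]
  field_simp

end PartialDeriv

/-- For the `(r+1)×(r+1)` matrix of indeterminates `X = (x_{ij})`, the function
`f = 1/det X` is annihilated by the toric operators `∂_{ij}∂_{kl} - ∂_{il}∂_{kj}` and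
satisfies the Euler equations `(Σ_j x_{ij}∂_{ij} + 1) f = 0` for each row `i` and
`(Σ_i x_{ij}∂_{ij} + 1) f = 0` for each column `j`; i.e. `1/det` is
`Δ_r × Δ_r`-hypergeometric of degree `β = (-1,…,-1)`. -/
theorem reciprocal_determinant_is_hypergeometric {r : ℕ}
    (f : (Fin (r + 1) → Fin (r + 1) → ℂ) → ℂ)
    (hf : f = fun X => (Matrix.det (Matrix.of X))⁻¹) :
    ∀ X : Fin (r + 1) → Fin (r + 1) → ℂ, Matrix.det (Matrix.of X) ≠ 0 →
      (∀ i k j l : Fin (r + 1), pdM i j (pdM k l f) X - pdM i l (pdM k j f) X = 0) ∧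
      (∀ i : Fin (r + 1), (∑ j, X i j * pdM i j f X) + f X = 0) ∧
      (∀ j : Fin (r + 1), (∑ i, X i j * pdM i j f X) + f X = 0) := by
  subst hf
  intro X hX
  have hunit : IsUnit (of X).det := hX.isUnit
  refine ⟨fun i k j l => ?_, fun i => ?_, fun j => ?_⟩
  · rw [pdM_pdM_inv_det hX, pdM_pdM_inv_det hX]
    ring
  · have hrow : ∑ j, X i j * (of X)⁻¹ j i = 1 := by
      simpa [Matrix.mul_apply] using congrFun (congrFun (mul_nonsing_inv _ hunit) i) i
    simp only [pdM_inv_det hX, mul_neg, neg_mul, ← mul_assoc, Finset.sum_neg_distrib,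
      ← Finset.sum_mul, hrow]
    ring
  · have hcol : ∑ i, X i j * (of X)⁻¹ j i = 1 := by
      simpa [Matrix.mul_apply, mul_comm] using congrFun (congrFun (nonsing_inv_mul _ hunit) j) j
    simp only [pdM_inv_det hX, mul_neg, neg_mul, ← mul_assoc, Finset.sum_neg_distrib,
      ← Finset.sum_mul, hcol]
    ring
end

section
/- Let a, b be two linearly independent vectors in ℝ², c = a + b, and r > 1 a real number with r ≠ 2. Then the four points O = (0,0), c, r·a, r·b do not lie on two parallel lines (in the sense that no partition of these four points into two pairs gives two parallel lines). -/
/-! Writing each of the three pairs of direction vectors in the basis `a, b`, parallelism forces the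
`2 × 2` determinant of their coordinates to vanish. The determinants are `2r`, `r (r - 1)` and
`-r (r - 1)`, none of which is zero for `r > 1`. -/

/-- Two vectors in the plane are parallel (as directions of lines through pairs of points). -/
def ParallelVec (v w : ℝ × ℝ) : Prop := ∃ k : ℝ, v = k • w ∨ w = k • v

theorem ParallelVec.mul_eq_mul_of_linearIndependent {a b : ℝ × ℝ}
    (hab : LinearIndependent ℝ ![a, b]) {x y x' y' : ℝ}
    (h : ParallelVec (x • a + y • b) (x' • a + y' • b)) : x * y' = y * x' := by
  have hpair := LinearIndependent.pair_iff.mp hab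
  obtain ⟨k, hk | hk⟩ := h
  · obtain ⟨hx, hy⟩ := hpair (x - k * x') (y - k * y') (by linear_combination (norm := module) hk)
    linear_combination y' * hx - x' * hy
  · obtain ⟨hx, hy⟩ := hpair (x' - k * x) (y' - k * y) (by linear_combination (norm := module) hk)
    linear_combination x * hy - y * hx

theorem four_points_not_on_two_parallel_lines_general (a b : ℝ × ℝ)
    (hab : LinearIndependent ℝ ![a, b]) (r : ℝ) (hr1 : 1 < r)
    (c : ℝ × ℝ) (hc : c = a + b) :
    ¬ ParallelVec (c - 0) (r • b - r • a) ∧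
    ¬ ParallelVec (r • a - 0) (r • b - c) ∧
    ¬ ParallelVec (r • b - 0) (r • a - c) := by
  subst hc
  have hdet := @ParallelVec.mul_eq_mul_of_linearIndependent a b hab
  refine ⟨fun h => ?_, fun h => ?_, fun h => ?_⟩
  · have := hdet (x := 1) (y := 1) (x' := -r) (y' := r) (by convert h using 2 <;> module)
    linarith
  · have := hdet (x := r) (y := 0) (x' := -1) (y' := r - 1) (by convert h using 2 <;> module)
    nlinarith
  · have := hdet (x := 0) (y := r) (x' := r - 1) (y' := -1) (by convert h using 2 <;> module)
    nlinarith

/-- Let `a, b` be linearly independent vectors in `ℝ²`, `c = a + b`, and `r > 1` with `r ≠ 2`.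
Then the four points `O, c, r•a, r•b` do not lie on two parallel lines, in the sense that
no partition of the four points into two pairs gives two parallel lines. -/
theorem four_points_not_on_two_parallel_lines (a b : ℝ × ℝ)
    (hab : LinearIndependent ℝ ![a, b]) (r : ℝ) (hr1 : 1 < r) (hr2 : r ≠ 2)
    (c : ℝ × ℝ) (hc : c = a + b) :
    ¬ ParallelVec (c - 0) (r • b - r • a) ∧
    ¬ ParallelVec (r • a - 0) (r • b - c) ∧
    ¬ ParallelVec (r • b - 0) (r • a - c) :=
  four_points_not_on_two_parallel_lines_general a b hab r hr1 c hc
end
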